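/- arXiv:2102.03918 — 6 statements merged into one kernel-verified Lean document; each statement's English description precedes it below -/
import Mathlib

section
/- Let T > 0 and let b : [0,T] → ℝ be càdlàg. Fix a positive integer n and define recursively t₀ = 0 and t_{k+1} = min( inf{ t ∈ (t_k, T] : b(t) < b(t_k) − 1/n }, t_k + 1/n, T ), with the convention inf ∅ = +∞. Then the sequence (t_k)_{k∈ℕ} is nondecreasing and there exists K ∈ ℕ such that t_k = T for all k ≥ K; in particular, the sequence takes only finitely many values. -/
open Filter Set Topology

/-- **Claim A.** For a càdlàg function `b : [0,T] → ℝ`, the recursively defined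
downcrossing times `t₀ = 0`,
`t_{k+1} = min( inf{ s ∈ (t_k, T] : b s < b (t_k) − 1/n }, t_k + 1/n, T )`
(with the convention `inf ∅ = +∞`, encoded by the two recursion hypotheses)
form a nondecreasing sequence which equals `T` from some index on; in
particular it takes only finitely many values. -/
theorem claimA_downcrossing_times_reach_T
    (T : ℝ) (hT : 0 < T) (b : ℝ → ℝ)
    (hb_rc : ∀ u ∈ Set.Ico (0 : ℝ) T, ContinuousWithinAt b (Set.Ici u) u)
    (hb_ll : ∀ u ∈ Set.Ioc (0 : ℝ) T, ∃ L : ℝ,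
      Filter.Tendsto b (nhdsWithin u (Set.Iio u)) (nhds L))
    (n : ℕ) (hn : 1 ≤ n)
    (t : ℕ → ℝ) (ht0 : t 0 = 0)
    (hrec_ne : ∀ k : ℕ,
      ({s : ℝ | s ∈ Set.Ioc (t k) T ∧ b s < b (t k) - 1 / (n : ℝ)}).Nonempty →
      t (k + 1) = min (sInf {s : ℝ | s ∈ Set.Ioc (t k) T ∧ b s < b (t k) - 1 / (n : ℝ)})
        (min (t k + 1 / (n : ℝ)) T))
    (hrec_e : ∀ k : ℕ,
      ¬ ({s : ℝ | s ∈ Set.Ioc (t k) T ∧ b s < b (t k) - 1 / (n : ℝ)}).Nonempty →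
      t (k + 1) = min (t k + 1 / (n : ℝ)) T) :
    Monotone t ∧ (∃ K : ℕ, ∀ k ≥ K, t k = T) ∧ (Set.range t).Finite := by
  set S : ℕ → Set ℝ := fun k => {s : ℝ | s ∈ Set.Ioc (t k) T ∧ b s < b (t k) - 1 / (n : ℝ)}
    with hS
  have hn' : (0 : ℝ) < 1 / n := by positivity
  -- basic bounds
  have hbase : ∀ k, 0 ≤ t k ∧ t k ≤ T := by
    intro k
    induction k with
    | zero => simp [ht0, hT.le]
    | succ k ih =>
      by_cases hne : (S k).Nonempty
      · rw [hrec_ne k hne]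
        have hinf : t k ≤ sInf (S k) := le_csInf hne fun s hs => hs.1.1.le
        constructor
        · exact le_min (ih.1.trans hinf) (le_min (by linarith [ih.1]) hT.le)
        · exact (min_le_right _ _).trans (min_le_right _ _)
      · rw [hrec_e k hne]
        exact ⟨le_min (by linarith [ih.1]) hT.le, min_le_right _ _⟩
  have hmono_step : ∀ k, t k ≤ t (k + 1) := by
    intro k
    have hk := hbase k
    by_cases hne : (S k).Nonempty
    · rw [hrec_ne k hne]
      exact le_min (le_csInf hne fun s hs => hs.1.1.le) (le_min (by linarith) hk.2)
    · rw [hrec_e k hne]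
      exact le_min (by linarith) hk.2
  have hmono : Monotone t := monotone_nat_of_le_succ hmono_step
  -- T is absorbing
  have habs : ∀ k, t k = T → t (k + 1) = T := by
    intro k hk
    have hne : ¬ (S k).Nonempty := by
      rintro ⟨s, hs⟩
      have := hs.1.1; have := hs.1.2; rw [hk] at *; linarith [hs.1.1, hs.1.2]
    rw [hrec_e k hne, hk]
    exact min_eq_right (by linarith)
  -- key: there is K with t K = T
  have hK : ∃ K, t K = T := by
    by_contra hno
    push_neg at hno
    have hlt : ∀ k, t k < T := fun k => lt_of_le_of_ne (hbase k).2 (hno k)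
    -- strict increase
    have hstrict : ∀ k, t k < t (k + 1) := by
      intro k
      have hk0 : 0 ≤ t k := (hbase k).1
      by_cases hne : (S k).Nonempty
      · rw [hrec_ne k hne]
        have hrc := hb_rc (t k) ⟨hk0, hlt k⟩
        rw [ContinuousWithinAt, Metric.tendsto_nhdsWithin_nhds] at hrc
        obtain ⟨δ, hδ, hH⟩ := hrc (1 / n) hn'
        have hinf : t k + δ ≤ sInf (S k) := by
          apply le_csInf hne
          intro s hs
          by_contra hcon
          push_neg at hcon
          have hs1 : s ∈ Set.Ici (t k) := hs.1.1.le
          have hds : dist s (t k) < δ := by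
            rw [Real.dist_eq, abs_of_nonneg (by linarith [hs.1.1])]
            linarith
          have hd := hH hs1 hds
          rw [Real.dist_eq] at hd
          have hd' := abs_lt.mp hd
          have := hs.2
          linarith [hd'.1]
        exact lt_min (by linarith) (lt_min (by linarith) (hlt k))
      · rw [hrec_e k hne]
        exact lt_min (by linarith) (hlt k)
    have hsm : StrictMono t := strictMono_nat_of_lt_succ hstrict
    have hbdd : BddAbove (Set.range t) := ⟨T, by rintro x ⟨k, rfl⟩; exact (hbase k).2⟩
    set c : ℝ := ⨆ i, t i with hc
    have htc : Tendsto t atTop (𝓝 c) := tendsto_atTop_ciSup hmono hbdd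
    have hklt : ∀ k, t k < c :=
      fun k => lt_of_lt_of_le (hstrict k) (le_ciSup hbdd (k + 1))
    have hc0 : 0 < c := by have := hklt 0; rw [ht0] at this; exact this
    have hcT : c ≤ T := ciSup_le fun k => (hbase k).2
    obtain ⟨L, hL⟩ := hb_ll c ⟨hc0, hcT⟩
    have htc' : Tendsto t atTop (𝓝[<] c) :=
      tendsto_nhdsWithin_of_tendsto_nhds_of_eventually_within t htc
        (Eventually.of_forall fun k => hklt k)
    have hbt : Tendsto (fun k => b (t k)) atTop (𝓝 L) := hL.comp htc'
    have hbt' : Tendsto (fun k => b (t (k + 1))) atTop (𝓝 L) :=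
      hbt.comp (tendsto_add_atTop_nat 1)
    have htc2 : Tendsto (fun k => t (k + 1)) atTop (𝓝 c) :=
      htc.comp (tendsto_add_atTop_nat 1)
    have hdiff : Tendsto (fun k => t (k + 1) - t k) atTop (𝓝 0) := by
      have := htc2.sub htc
      simpa using this
    have Ev1 : ∀ᶠ k in atTop, t (k + 1) - t k < 1 / n :=
      hdiff.eventually_lt_const hn'
    have Ev2 : ∀ᶠ k in atTop, dist (b (t k)) L < 1 / (2 * n) :=
      (Metric.tendsto_nhds.mp hbt) _ (by positivity)
    have Ev3 : ∀ᶠ k in atTop, dist (b (t (k + 1))) L < 1 / (2 * n) :=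
      (Metric.tendsto_nhds.mp hbt') _ (by positivity)
    obtain ⟨k, h1, h2, h3⟩ := (Ev1.and (Ev2.and Ev3)).exists
    -- at this k the recursion must take the infimum branch
    have hne : (S k).Nonempty := by
      by_contra hne
      have := hrec_e k hne
      have : t (k + 1) = min (t k + 1 / n) T := this
      have hTk := hlt (k + 1)
      rcases min_cases (t k + 1 / (n : ℝ)) T with ⟨he, _⟩ | ⟨he, _⟩ <;>
        rw [he] at this <;> [linarith; exact absurd this.symm hTk.ne']
    have heq := hrec_ne k hne
    have htk1 : t (k + 1) = sInf (S k) := by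
      rcases le_or_gt (sInf (S k)) (min (t k + 1 / (n : ℝ)) T) with hle | hgt
      · rw [heq]; exact min_eq_left hle
      · exfalso
        have he2 : t (k + 1) = min (t k + 1 / (n : ℝ)) T := by
          rw [heq]; exact min_eq_right hgt.le
        rcases min_cases (t k + 1 / (n : ℝ)) T with ⟨he, _⟩ | ⟨he, _⟩
        · rw [he] at he2; linarith
        · rw [he] at he2; exact (hlt (k + 1)).ne he2
    -- b drops by at least 1/n
    have hdrop : b (t (k + 1)) ≤ b (t k) - 1 / n := by
      rw [htk1]
      by_contra hcon
      push_neg at hcon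
      set m := sInf (S k) with hm
      have hm0 : 0 ≤ m := by rw [← htk1]; exact (hbase (k + 1)).1
      have hmT : m < T := by rw [← htk1]; exact hlt (k + 1)
      have hrc := hb_rc m ⟨hm0, hmT⟩
      rw [ContinuousWithinAt, Metric.tendsto_nhdsWithin_nhds] at hrc
      obtain ⟨δ, hδ, hH⟩ := hrc (b m - (b (t k) - 1 / n)) (by linarith)
      obtain ⟨s, hsS, hsδ⟩ := Real.lt_sInf_add_pos hne hδ
      have hms : m ≤ s := csInf_le ⟨t k, fun x hx => hx.1.1.le⟩ hsS
      have hds : dist s m < δ := by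
        rw [Real.dist_eq, abs_of_nonneg (by linarith)]; linarith
      have := hH (mem_Ici.mpr hms) hds
      rw [Real.dist_eq] at this
      have := abs_lt.mp this
      have hbs := hsS.2
      linarith [this.1]
    rw [Real.dist_eq] at h2 h3
    have h2' := abs_lt.mp h2
    have h3' := abs_lt.mp h3
    have : 1 / (2 * (n : ℝ)) + 1 / (2 * n) = 1 / n := by
      field_simp
      norm_num
    linarith [h2'.1, h2'.2, h3'.1, h3'.2]
  -- conclude
  obtain ⟨K, hKT⟩ := hK
  have hall : ∀ k ≥ K, t k = T := by
    intro k hk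
    induction k, hk using Nat.le_induction with
    | base => exact hKT
    | succ k hk ih => exact habs k ih
  refine ⟨hmono, ⟨K, hall⟩, ?_⟩
  apply Set.Finite.subset ((Set.finite_Iic K).image t)
  rintro x ⟨k, rfl⟩
  by_cases hk : k ≤ K
  · exact ⟨k, hk, rfl⟩
  · exact ⟨K, le_refl K, by rw [hKT, hall k (le_of_not_ge hk)]⟩
end

section
/- Let T > 0 and let b : [0,T] → ℝ be càdlàg. Define recursively s₀ = 0 and s_{k+1} = min( inf{ t ∈ (s_k, T] : b(t) > b(s_k) + 1 }, s_k + 1, T ), with the convention inf ∅ = +∞. Then (1) there exists K ∈ ℕ such that s_k = T for all k ≥ K, and (2) the piecewise-constant function b̃ : [0,T] → ℝ defined by b̃(t) = b(s_k) + 1 for t ∈ [s_k, s_{k+1}) (for each k with s_k < s_{k+1}) and b̃(T) = b(T) + 1 is well defined and satisfies b̃(t) ≥ b(t) for all t ∈ [0,T]. -/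
open Filter Set Topology

/-- Upper discretization of a càdlàg function `b : [0,T] → ℝ` (Claim B of the paper):
the recursively defined upcrossing times `s₀ = 0`,
`s_{k+1} = min( inf{ x ∈ (s_k, T] : b x > b (s_k) + 1 }, s_k + 1, T )`
(convention `inf ∅ = +∞`, encoded by the two recursion hypotheses) reach `T` after
finitely many steps, the intervals `[s_k, s_{k+1})` together with `{T}` cover `[0,T]`,
and the piecewise-constant function `b̃` defined by `b̃ = b (s_k) + 1` on
`[s_k, s_{k+1})` and `b̃ T = b T + 1` is well defined and dominates `b` on `[0,T]`. -/
theorem upper_discretization_dominates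
    (T : ℝ) (hT : 0 < T) (b : ℝ → ℝ)
    (hb_rc : ∀ u ∈ Set.Ico (0 : ℝ) T, ContinuousWithinAt b (Set.Ici u) u)
    (hb_ll : ∀ u ∈ Set.Ioc (0 : ℝ) T, ∃ L : ℝ,
      Filter.Tendsto b (nhdsWithin u (Set.Iio u)) (nhds L))
    (s : ℕ → ℝ) (hs0 : s 0 = 0)
    (hrec_ne : ∀ k : ℕ,
      ({x : ℝ | x ∈ Set.Ioc (s k) T ∧ b (s k) + 1 < b x}).Nonempty →
      s (k + 1) = min (sInf {x : ℝ | x ∈ Set.Ioc (s k) T ∧ b (s k) + 1 < b x})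
        (min (s k + 1) T))
    (hrec_e : ∀ k : ℕ,
      ¬ ({x : ℝ | x ∈ Set.Ioc (s k) T ∧ b (s k) + 1 < b x}).Nonempty →
      s (k + 1) = min (s k + 1) T) :
    (∃ K : ℕ, ∀ k ≥ K, s k = T) ∧
    (∀ x ∈ Set.Ico (0 : ℝ) T, ∃ k : ℕ, x ∈ Set.Ico (s k) (s (k + 1))) ∧
    (∃ btilde : ℝ → ℝ,
      (∀ k : ℕ, ∀ x ∈ Set.Ico (s k) (s (k + 1)), btilde x = b (s k) + 1) ∧
      btilde T = b T + 1 ∧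
      (∀ x ∈ Set.Icc (0 : ℝ) T, b x ≤ btilde x)) := by
  set S : ℕ → Set ℝ := fun k => {x : ℝ | x ∈ Set.Ioc (s k) T ∧ b (s k) + 1 < b x} with hSdef
  -- basic bounds
  have hsT : ∀ k, s k ≤ T := by
    intro k
    cases k with
    | zero => rw [hs0]; exact hT.le
    | succ k =>
      rcases em ((S k).Nonempty) with h | h
      · rw [hrec_ne k h]
        exact (min_le_right _ _).trans (min_le_right _ _)
      · rw [hrec_e k h]
        exact min_le_right _ _
  have hbddS : ∀ k, BddBelow (S k) := fun k => ⟨s k, fun y hy => hy.1.1.le⟩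
  have hmono_step : ∀ k, s k ≤ s (k + 1) := by
    intro k
    rcases em ((S k).Nonempty) with h | h
    · rw [hrec_ne k h]
      exact le_min (le_csInf h (fun x hx => hx.1.1.le))
        (le_min (by linarith) (hsT k))
    · rw [hrec_e k h]
      exact le_min (by linarith) (hsT k)
  have hmono : Monotone s := monotone_nat_of_le_succ hmono_step
  have h0le : ∀ k, 0 ≤ s k := fun k => hs0 ▸ hmono (Nat.zero_le k)
  -- strict increase while below T
  have hstrict : ∀ k, s k < T → s k < s (k + 1) := by
    intro k hk
    have hrc := hb_rc (s k) ⟨h0le k, hk⟩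
    rw [ContinuousWithinAt, Metric.tendsto_nhdsWithin_nhds] at hrc
    obtain ⟨δ, hδ0, hδ⟩ := hrc 1 one_pos
    rcases em ((S k).Nonempty) with h | h
    · rw [hrec_ne k h]
      have hlb : s k + min δ 1 ≤ sInf (S k) := by
        apply le_csInf h
        intro x hx
        by_contra hcon
        push_neg at hcon
        have hx1 : s k < x := hx.1.1
        have hxd : dist x (s k) < δ := by
          rw [Real.dist_eq, abs_of_pos (by linarith)]
          have := min_le_left δ (1 : ℝ)
          linarith
        have := hδ (le_of_lt hx1) hxd
        rw [Real.dist_eq] at this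
        have := abs_lt.mp this
        have := hx.2
        linarith [this]
      have hmin : 0 < min δ 1 := lt_min hδ0 one_pos
      refine lt_min (by linarith) (lt_min (by linarith) hk)
    · rw [hrec_e k h]
      exact lt_min (by linarith) hk
  -- key: if the step is strictly below both caps, b jumps by at least 1
  have hkey : ∀ k, s (k + 1) < s k + 1 → s (k + 1) < T → b (s k) + 1 ≤ b (s (k + 1)) := by
    intro k h1 h2
    rcases em ((S k).Nonempty) with hne | he
    swap
    · exfalso
      rw [hrec_e k he] at h1 h2
      rcases le_total (s k + 1) T with h | h
      · rw [min_eq_left h] at h1; exact lt_irrefl _ h1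
      · rw [min_eq_right h] at h2; exact lt_irrefl _ h2
    have heq := hrec_ne k hne
    set m := sInf (S k) with hm
    have hmc : s (k + 1) = m := by
      rw [heq]
      rcases min_cases m (min (s k + 1) T) with ⟨h, _⟩ | ⟨h, hc⟩
      · exact h
      · exfalso
        rw [heq, h] at h1 h2
        rcases le_total (s k + 1) T with hh | hh
        · rw [min_eq_left hh] at h1; exact lt_irrefl _ h1
        · rw [min_eq_right hh] at h2; exact lt_irrefl _ h2
    have hm0 : 0 ≤ m := hmc ▸ h0le (k + 1)
    have hmT : m < T := hmc ▸ h2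
    by_contra hlt
    push_neg at hlt
    have hrc := hb_rc m ⟨hm0, hmT⟩
    rw [ContinuousWithinAt, Metric.tendsto_nhdsWithin_nhds] at hrc
    rw [hmc] at hlt
    obtain ⟨δ, hδ0, hδ⟩ := hrc (b (s k) + 1 - b m) (by linarith)
    obtain ⟨x, hxS, hxlt⟩ := Real.lt_sInf_add_pos hne hδ0
    have hmx : m ≤ x := csInf_le (hbddS k) hxS
    have hxd : dist x m < δ := by
      rw [Real.dist_eq, abs_of_nonneg (by linarith)]
      linarith
    have := hδ hmx hxd
    rw [Real.dist_eq] at this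
    have := abs_lt.mp this
    have hbx := hxS.2
    linarith [this.2]
  -- Part 1: s reaches T
  have hreach : ∃ K, s K = T := by
    by_contra hcon
    push_neg at hcon
    have hlt : ∀ k, s k < T := fun k => (hsT k).lt_of_ne (hcon k)
    have hbdd : BddAbove (Set.range s) := by
      refine ⟨T, ?_⟩
      rintro x ⟨k, rfl⟩
      exact hsT k
    have hconv : Tendsto s atTop (𝓝 (⨆ k, s k)) := tendsto_atTop_ciSup hmono hbdd
    set sstar := ⨆ k, s k with hsstar
    have hle : ∀ k, s k ≤ sstar := fun k => le_ciSup hbdd k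
    have hslt : ∀ k, s k < sstar := fun k => lt_of_lt_of_le (hstrict k (hlt k)) (hle (k + 1))
    have hsstarT : sstar ≤ T := ciSup_le hsT
    have hsstar0 : 0 < sstar := by
      have h01 : s 0 < s 1 := hstrict 0 (hlt 0)
      rw [hs0] at h01
      exact lt_of_lt_of_le h01 (hle 1)
    obtain ⟨L, hL⟩ := hb_ll sstar ⟨hsstar0, hsstarT⟩
    have hwithin : Tendsto s atTop (𝓝[Set.Iio sstar] sstar) :=
      tendsto_nhdsWithin_of_tendsto_nhds_of_eventually_within s hconv
        (Filter.Eventually.of_forall hslt)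
    have htend : Tendsto (fun k => b (s k)) atTop (𝓝 L) := hL.comp hwithin
    have htend' : Tendsto (fun k => b (s (k + 1))) atTop (𝓝 L) :=
      htend.comp (tendsto_add_atTop_nat 1)
    have hdiff : Tendsto (fun k => b (s (k + 1)) - b (s k)) atTop (𝓝 0) := by
      have := htend'.sub htend
      simpa using this
    have hconv' : Tendsto (fun k => s (k + 1)) atTop (𝓝 sstar) :=
      hconv.comp (tendsto_add_atTop_nat 1)
    have hgap : Tendsto (fun k => s (k + 1) - s k) atTop (𝓝 0) := by
      have := hconv'.sub hconv
      simpa using this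
    have hA : ∀ᶠ k in atTop, s (k + 1) - s k < 1 := hgap.eventually_lt_const one_pos
    have hB : ∀ᶠ k in atTop, b (s (k + 1)) - b (s k) < 1 := hdiff.eventually_lt_const one_pos
    obtain ⟨k, h1, h2⟩ := (hA.and hB).exists
    have := hkey k (by linarith) (hlt (k + 1))
    linarith
  obtain ⟨K, hK⟩ := hreach
  have part1 : ∀ k ≥ K, s k = T := fun k hk =>
    le_antisymm (hsT k) (hK ▸ hmono hk)
  -- Part 2: coverage
  have part2 : ∀ x ∈ Set.Ico (0 : ℝ) T, ∃ k : ℕ, x ∈ Set.Ico (s k) (s (k + 1)) := by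
    intro x hx
    obtain ⟨hx0, hxT⟩ := hx
    have hex : ∃ j, x < s j := ⟨K, by rw [hK]; exact hxT⟩
    have hspec : x < s (Nat.find hex) := Nat.find_spec hex
    have hm0 : Nat.find hex ≠ 0 := by
      intro h
      rw [h, hs0] at hspec
      linarith
    obtain ⟨n, hn⟩ := Nat.exists_eq_succ_of_ne_zero hm0
    have hmin : ¬ x < s n := Nat.find_min hex (by omega)
    rw [hn] at hspec
    exact ⟨n, not_lt.mp hmin, hspec⟩
  refine ⟨⟨K, part1⟩, part2, ?_⟩
  -- Part 3: btilde
  classical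
  have hnotT : ¬ ∃ k : ℕ, T ∈ Set.Ico (s k) (s (k + 1)) := by
    rintro ⟨k, _, hk2⟩
    exact absurd hk2 (not_lt.mpr (hsT (k + 1)))
  refine ⟨fun x => if h : ∃ k : ℕ, x ∈ Set.Ico (s k) (s (k + 1)) then
      b (s (Nat.find h)) + 1 else b T + 1, ?_, ?_, ?_⟩
  · intro k x hx
    have h : ∃ j : ℕ, x ∈ Set.Ico (s j) (s (j + 1)) := ⟨k, hx⟩
    simp only [dif_pos h]
    congr 2
    have hj := Nat.find_spec h
    set j := Nat.find h with hjdef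
    rcases lt_trichotomy j k with hlt | heq | hgt
    · exfalso
      have : s (j + 1) ≤ s k := hmono hlt
      have := hx.1
      have := hj.2
      linarith
    · rw [heq]
    · exfalso
      have : s (k + 1) ≤ s j := hmono hgt
      have := hj.1
      have := hx.2
      linarith
  · simp only [dif_neg hnotT]
  · intro x hx
    obtain ⟨hx0, hxT⟩ := hx
    rcases eq_or_lt_of_le hxT with rfl | hxT'
    · simp only [dif_neg hnotT]
      linarith
    · obtain ⟨k, hk⟩ := part2 x ⟨hx0, hxT'⟩
      have h : ∃ j : ℕ, x ∈ Set.Ico (s j) (s (j + 1)) := ⟨k, hk⟩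
      simp only [dif_pos h]
      have hj := Nat.find_spec h
      set j := Nat.find h with hjdef
      -- show b x ≤ b (s j) + 1
      rcases eq_or_lt_of_le hj.1 with heq | hlt
      · rw [← heq]; linarith
      · by_contra hcon
        push_neg at hcon
        have hxS : x ∈ S j := ⟨⟨hlt, hxT'.le⟩, by linarith⟩
        have hne : (S j).Nonempty := ⟨x, hxS⟩
        have := hrec_ne j hne
        have hinf : sInf (S j) ≤ x := csInf_le (hbddS j) hxS
        have hj2 := hj.2
        rw [this] at hj2
        have := min_le_left (sInf (S j)) (min (s j + 1) T)
        linarith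
end

section
/- Let T > 0, let b : [0,T] → ℝ be càdlàg, fix a positive integer n, and define recursively t₀ⁿ = 0 and t_{k+1}ⁿ = min( inf{ t ∈ (t_kⁿ, T] : b(t) < b(t_kⁿ) − 1/n }, t_kⁿ + 1/n, T ), with the convention inf ∅ = +∞. Define bⁿ : [0,T] → ℝ by bⁿ(t) = b(t_kⁿ) − 1/n for t ∈ [t_kⁿ, t_{k+1}ⁿ) (for each k with t_kⁿ < t_{k+1}ⁿ) and bⁿ(T) = b(T) − 1/n. Then bⁿ is well defined on all of [0,T] and bⁿ(t) ≤ b(t) for every t ∈ [0,T]. -/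
open Filter Set Topology

/-- Lower discretization of a càdlàg function `b : [0,T] → ℝ` (Step 1 of the proof of
the key lemma): with the downcrossing times `t₀ⁿ = 0`,
`t_{k+1}ⁿ = min( inf{ s ∈ (t_kⁿ, T] : b s < b (t_kⁿ) − 1/n }, t_kⁿ + 1/n, T )`
(convention `inf ∅ = +∞`, encoded by the two recursion hypotheses), the intervals
`[t_kⁿ, t_{k+1}ⁿ)` together with `{T}` cover `[0,T]`, and the function `bⁿ` defined by
`bⁿ = b (t_kⁿ) − 1/n` on `[t_kⁿ, t_{k+1}ⁿ)` and `bⁿ T = b T − 1/n` is well defined on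
all of `[0,T]` and satisfies `bⁿ ≤ b` there. -/
theorem lower_discretization_below
    (T : ℝ) (hT : 0 < T) (b : ℝ → ℝ)
    (hb_rc : ∀ u ∈ Set.Ico (0 : ℝ) T, ContinuousWithinAt b (Set.Ici u) u)
    (hb_ll : ∀ u ∈ Set.Ioc (0 : ℝ) T, ∃ L : ℝ,
      Filter.Tendsto b (nhdsWithin u (Set.Iio u)) (nhds L))
    (n : ℕ) (hn : 1 ≤ n)
    (t : ℕ → ℝ) (ht0 : t 0 = 0)
    (hrec_ne : ∀ k : ℕ,
      ({s : ℝ | s ∈ Set.Ioc (t k) T ∧ b s < b (t k) - 1 / (n : ℝ)}).Nonempty →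
      t (k + 1) = min (sInf {s : ℝ | s ∈ Set.Ioc (t k) T ∧ b s < b (t k) - 1 / (n : ℝ)})
        (min (t k + 1 / (n : ℝ)) T))
    (hrec_e : ∀ k : ℕ,
      ¬ ({s : ℝ | s ∈ Set.Ioc (t k) T ∧ b s < b (t k) - 1 / (n : ℝ)}).Nonempty →
      t (k + 1) = min (t k + 1 / (n : ℝ)) T) :
    (∀ x ∈ Set.Ico (0 : ℝ) T, ∃ k : ℕ, x ∈ Set.Ico (t k) (t (k + 1))) ∧
    (∃ bn : ℝ → ℝ,
      (∀ k : ℕ, ∀ x ∈ Set.Ico (t k) (t (k + 1)), bn x = b (t k) - 1 / (n : ℝ)) ∧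
      bn T = b T - 1 / (n : ℝ) ∧
      (∀ x ∈ Set.Icc (0 : ℝ) T, bn x ≤ b x)) := by

  classical
  have hnpos : (0:ℝ) < (n:ℝ) := by exact_mod_cast hn
  have hinv : (0:ℝ) < 1 / (n:ℝ) := by positivity
  set S : ℕ → Set ℝ :=
    fun k => {s : ℝ | s ∈ Set.Ioc (t k) T ∧ b s < b (t k) - 1 / (n : ℝ)} with hS
  have hbdd : ∀ k, BddBelow (S k) := fun k => ⟨t k, fun s hs => hs.1.1.le⟩
  -- each t k lies in [0, T]
  have hmem : ∀ k, 0 ≤ t k ∧ t k ≤ T := by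
    intro k
    induction k with
    | zero => simp [ht0, hT.le]
    | succ k ih =>
      rcases ih with ⟨h0, h1⟩
      by_cases hne : (S k).Nonempty
      · rw [hrec_ne k hne]
        constructor
        · refine le_min ?_ (le_min (by linarith) hT.le)
          exact le_trans h0 (le_csInf hne fun s hs => hs.1.1.le)
        · exact (min_le_right _ _).trans (min_le_right _ _)
      · rw [hrec_e k hne]
        exact ⟨le_min (by linarith) hT.le, min_le_right _ _⟩
  have hmono : ∀ k, t k ≤ t (k+1) := by
    intro k
    obtain ⟨h0, h1⟩ := hmem k
    by_cases hne : (S k).Nonempty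
    · rw [hrec_ne k hne]
      exact le_min (le_csInf hne fun s hs => hs.1.1.le) (le_min (by linarith) h1)
    · rw [hrec_e k hne]; exact le_min (by linarith) h1
  have hMono : Monotone t := monotone_nat_of_le_succ hmono
  -- strict increase while below T
  have hstrict : ∀ k, t k < T → t k < t (k+1) := by
    intro k hk
    obtain ⟨h0, _⟩ := hmem k
    have hcw := hb_rc (t k) ⟨h0, hk⟩
    have hev : ∀ᶠ s in nhdsWithin (t k) (Set.Ici (t k)), b (t k) - 1/(n:ℝ) < b s :=
      hcw (Ioi_mem_nhds (by linarith))
    obtain ⟨δ, hδ, hsub⟩ := Metric.mem_nhdsWithin_iff.mp hev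
    have hδ' : ∀ s, t k ≤ s → dist s (t k) < δ → b (t k) - 1/(n:ℝ) < b s :=
      fun s h1 h2 => hsub ⟨Metric.mem_ball.mpr h2, h1⟩
    by_cases hne : (S k).Nonempty
    · rw [hrec_ne k hne]
      refine lt_min ?_ (lt_min (by linarith) hk)
      have hlow : ∀ s ∈ S k, t k + δ ≤ s := by
        intro s hs
        by_contra h
        push_neg at h
        have hd : dist s (t k) < δ := by
          rw [Real.dist_eq, abs_of_nonneg (by linarith [hs.1.1.le] : (0:ℝ) ≤ s - t k)]
          linarith
        have := hδ' s hs.1.1.le hd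
        have := hs.2
        linarith
      exact lt_of_lt_of_le (by linarith) (le_csInf hne hlow)
    · rw [hrec_e k hne]; exact lt_min (by linarith) hk
  -- the drop lemma
  have hdrop : ∀ k, t k < T → t (k+1) < min (t k + 1/(n:ℝ)) T →
      b (t (k+1)) ≤ b (t k) - 1/(n:ℝ) := by
    intro k hk hlt
    have hne : (S k).Nonempty := by
      by_contra h
      rw [hrec_e k h] at hlt
      exact lt_irrefl _ hlt
    have hrec := hrec_ne k hne
    have heq : t (k+1) = sInf (S k) := by
      rcases min_cases (sInf (S k)) (min (t k + 1/(n:ℝ)) T) with ⟨h1, h2⟩ | ⟨h1, h2⟩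
      · rw [hrec, h1]
      · rw [hrec, h1] at hlt
        exact absurd hlt (lt_irrefl _)
    by_contra hcon
    push_neg at hcon
    have hτT : t (k+1) < T := lt_of_lt_of_le hlt (min_le_right _ _)
    have hτ0 : 0 ≤ t (k+1) := (hmem (k+1)).1
    have hcw := hb_rc (t (k+1)) ⟨hτ0, hτT⟩
    have hev : ∀ᶠ s in nhdsWithin (t (k+1)) (Set.Ici (t (k+1))), b (t k) - 1/(n:ℝ) < b s :=
      hcw (Ioi_mem_nhds hcon)
    obtain ⟨δ, hδ, hsub⟩ := Metric.mem_nhdsWithin_iff.mp hev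
    have hδ' : ∀ s, t (k+1) ≤ s → dist s (t (k+1)) < δ → b (t k) - 1/(n:ℝ) < b s :=
      fun s h1 h2 => hsub ⟨Metric.mem_ball.mpr h2, h1⟩
    obtain ⟨s, hs, hsδ⟩ := exists_lt_of_csInf_lt hne
      (show sInf (S k) < t (k+1) + δ by rw [← heq]; linarith)
    have hsge : t (k+1) ≤ s := heq ▸ csInf_le (hbdd k) hs
    have hd : dist s (t (k+1)) < δ := by
      rw [Real.dist_eq, abs_of_nonneg (by linarith)]
      linarith
    have h1 := hδ' s hsge hd
    have h2 := hs.2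
    linarith
  -- the times eventually pass any x < T
  have hbeyond : ∀ x, x < T → ∃ k, x < t k := by
    intro x hx
    by_contra h
    push_neg at h
    have hlt : ∀ k, t k < T := fun k => lt_of_le_of_lt (h k) hx
    have hbdd' : BddAbove (Set.range t) := ⟨x, by rintro _ ⟨k, rfl⟩; exact h k⟩
    have htend : Tendsto t atTop (nhds (⨆ k, t k)) := tendsto_atTop_ciSup hMono hbdd'
    set τ := ⨆ k, t k with hτ
    have hτle : τ ≤ x := ciSup_le h
    have hτpos : 0 < τ := lt_of_lt_of_le (ht0 ▸ hstrict 0 (hlt 0)) (le_ciSup hbdd' 1)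
    obtain ⟨L, hL⟩ := hb_ll τ ⟨hτpos, le_of_lt (lt_of_le_of_lt hτle hx)⟩
    have hklt : ∀ k, t k < τ :=
      fun k => lt_of_lt_of_le (hstrict k (hlt k)) (le_ciSup hbdd' (k+1))
    have htend' : Tendsto t atTop (nhdsWithin τ (Set.Iio τ)) :=
      tendsto_nhdsWithin_of_tendsto_nhds_of_eventually_within t htend
        (Eventually.of_forall hklt)
    have hbL : Tendsto (fun k => b (t k)) atTop (nhds L) := hL.comp htend'
    have hdiff : Tendsto (fun k => t (k+1) - t k) atTop (nhds 0) := by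
      have h1 : Tendsto (fun k => t (k+1)) atTop (nhds τ) :=
        htend.comp (tendsto_add_atTop_nat 1)
      simpa using h1.sub htend
    have hev : ∀ᶠ k in atTop, t (k+1) < min (t k + 1/(n:ℝ)) T := by
      filter_upwards [hdiff.eventually (eventually_lt_nhds hinv)] with k hk
      exact lt_min (by linarith) (hlt (k+1))
    have hevd : ∀ᶠ k in atTop, b (t (k+1)) - b (t k) ≤ -(1/(n:ℝ)) := by
      filter_upwards [hev] with k hk
      have := hdrop k (hlt k) hk
      linarith
    have hdb : Tendsto (fun k => b (t (k+1)) - b (t k)) atTop (nhds 0) := by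
      have h1 : Tendsto (fun k => b (t (k+1))) atTop (nhds L) :=
        hbL.comp (tendsto_add_atTop_nat 1)
      simpa using h1.sub hbL
    have hfin : (0:ℝ) ≤ -(1/(n:ℝ)) := le_of_tendsto hdb hevd
    linarith
  -- the covering property
  have hcover : ∀ x ∈ Set.Ico (0:ℝ) T, ∃ k, x ∈ Set.Ico (t k) (t (k+1)) := by
    rintro x ⟨hx0, hxT⟩
    have hex : ∃ k, x < t k := hbeyond x hxT
    have hk0 : x < t (Nat.find hex) := Nat.find_spec hex
    have hk0ne : Nat.find hex ≠ 0 := by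
      intro h
      rw [h, ht0] at hk0
      linarith
    obtain ⟨j, hj⟩ := Nat.exists_eq_succ_of_ne_zero hk0ne
    have hle : t j ≤ x := not_lt.mp (Nat.find_min hex (by omega))
    refine ⟨j, hle, ?_⟩
    rw [hj] at hk0
    exact hk0
  -- on overlapping intervals the values agree
  have huniq : ∀ j k x, x ∈ Set.Ico (t j) (t (j+1)) → x ∈ Set.Ico (t k) (t (k+1)) →
      t j = t k := by
    intro j k x hj hk
    rcases lt_trichotomy j k with h | h | h
    · exact absurd ((hMono (show j+1 ≤ k by omega)).trans hk.1) (not_le.mpr hj.2)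
    · rw [h]
    · exact absurd ((hMono (show k+1 ≤ j by omega)).trans hj.1) (not_le.mpr hk.2)
  refine ⟨hcover, ?_⟩
  refine ⟨fun x => if hx : ∃ k, x ∈ Set.Ico (t k) (t (k+1))
      then b (t hx.choose) - 1/(n:ℝ) else b T - 1/(n:ℝ), ?_, ?_, ?_⟩
  · intro k x hx
    have hex : ∃ j, x ∈ Set.Ico (t j) (t (j+1)) := ⟨k, hx⟩
    simp only [dif_pos hex]
    rw [huniq hex.choose k x hex.choose_spec hx]
  · have hnT : ¬ ∃ k, T ∈ Set.Ico (t k) (t (k+1)) := by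
      rintro ⟨k, _, hk2⟩
      exact absurd (hmem (k+1)).2 (not_le.mpr hk2)
    simp only [dif_neg hnT]
  · rintro x ⟨hx0, hxT⟩
    rcases eq_or_lt_of_le hxT with rfl | hxT'
    · have hnT : ¬ ∃ k, x ∈ Set.Ico (t k) (t (k+1)) := by
        rintro ⟨k, _, hk2⟩
        exact absurd (hmem (k+1)).2 (not_le.mpr hk2)
      simp only [dif_neg hnT]
      linarith
    · obtain ⟨k, hk⟩ := hcover x ⟨hx0, hxT'⟩
      have hex : ∃ j, x ∈ Set.Ico (t j) (t (j+1)) := ⟨k, hk⟩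
      simp only [dif_pos hex]
      rw [huniq hex.choose k x hex.choose_spec hk]
      rcases eq_or_lt_of_le hk.1 with rfl | hlt
      · linarith
      · by_contra hcon
        push_neg at hcon
        have hxS : x ∈ S k := ⟨⟨hlt, hxT'.le⟩, by linarith⟩
        have hne : (S k).Nonempty := ⟨x, hxS⟩
        have := hrec_ne k hne
        have h1 : t (k+1) ≤ x := this ▸ (min_le_left _ _).trans (csInf_le (hbdd k) hxS)
        exact absurd hk.2 (not_lt.mpr h1)
end

section
/- Let T > 0 and N be a positive integer. Let b : [0,T] × ℝᴺ → [0,∞) be continuous and nondecreasing in each of its last N arguments. Let (fₙ)_{n∈ℕ} be functions from [0,T] to ℝᴺ such that fₙ(u) ≤ f_{n+1}(u) componentwise for every u ∈ [0,T] and every n, converging pointwise to a function f : [0,T] → ℝᴺ. Let s ∈ [0,T] be such that every fₙ is continuous at s, and let ([αₙ, βₙ])_{n∈ℕ} be closed subintervals of [0,T] with s ∈ [αₙ, βₙ] for all n and βₙ − αₙ → 0. Then inf_{u ∈ [αₙ, βₙ]} b(u, fₙ(u)) → b(s, f(s)) as n → ∞. -/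
/-!
Write `hₙ(u) = b(u, fₙ(u))`. The `hₙ` increase in `n` and are continuous at `s`, and
`hₙ(s) → b(s, g(s))`. Bounding the infimum by the value at `s` gives the upper estimate.
For the lower one, fix `m` with `hₘ(s)` close to the limit: by continuity of `hₘ` at `s`,
`hₘ` stays above `hₘ(s) - ε` on the shrinking intervals, and `hₙ ≥ hₘ` there once `n ≥ m`.
-/

open Filter Set Topology

theorem tendsto_Icc_smallSets_nhdsWithin {ι : Type*} {l : Filter ι} {S : Set ℝ} {s : ℝ}
    {α β : ι → ℝ} (hmem : ∀ n, s ∈ Icc (α n) (β n)) (hsub : ∀ n, Icc (α n) (β n) ⊆ S)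
    (hlen : Tendsto (fun n => β n - α n) l (𝓝 0)) :
    Tendsto (fun n => Icc (α n) (β n)) l (𝓝[S] s).smallSets := by
  refine tendsto_smallSets_iff.2 fun t ht => ?_
  obtain ⟨ε, hε, hball⟩ := Metric.mem_nhdsWithin_iff.1 ht
  filter_upwards [hlen.eventually (eventually_lt_nhds hε)] with n hn u hu
  refine hball ⟨?_, hsub n hu⟩
  rw [Metric.mem_ball, Real.dist_eq, abs_sub_lt_iff]
  constructor <;> linarith [hu.1, hu.2, (hmem n).1, (hmem n).2]

theorem tendsto_sInf_image_of_monotone {X : Type*} [TopologicalSpace X] {S : Set X} {s : X}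
    {h : ℕ → X → ℝ} {I : ℕ → Set X} {L : ℝ}
    (hmono : ∀ u ∈ S, Monotone fun n => h n u) (hcont : ∀ n, ContinuousWithinAt (h n) S s)
    (hlim : Tendsto (fun n => h n s) atTop (𝓝 L)) (hs : ∀ n, s ∈ I n)
    (hI : Tendsto I atTop (𝓝[S] s).smallSets) :
    Tendsto (fun n => sInf (h n '' I n)) atTop (𝓝 L) := by
  have hlower : ∀ a < L, ∀ᶠ n in atTop, ∀ u ∈ I n, a < h n u := by
    intro a ha
    obtain ⟨m, hm⟩ := (hlim.eventually (eventually_gt_nhds ha)).exists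
    have hnear : ∀ᶠ u in 𝓝[S] s, a < h m u ∧ u ∈ S :=
      ((hcont m).eventually (eventually_gt_nhds hm)).and self_mem_nhdsWithin
    filter_upwards [hI.eventually (eventually_smallSets_forall.2 hnear),
      eventually_ge_atTop m] with n hn hmn u hu
    exact (hn u hu).1.trans_le (hmono u (hn u hu).2 hmn)
  have hbdd : ∀ᶠ n in atTop, BddBelow (h n '' I n) :=
    (hlower (L - 1) (by linarith)).mono fun n hn =>
      ⟨L - 1, forall_mem_image.2 fun u hu => (hn u hu).le⟩
  refine tendsto_order.2 ⟨fun a ha => ?_, fun a ha => ?_⟩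
  · obtain ⟨c, hac, hcL⟩ := exists_between ha
    filter_upwards [hlower c hcL] with n hn
    exact hac.trans_le <|
      le_csInf ((nonempty_of_mem (hs n)).image _) (forall_mem_image.2 fun u hu => (hn u hu).le)
  · filter_upwards [hbdd, hlim.eventually (eventually_lt_nhds ha)] with n hbn hn
    exact (csInf_le hbn (mem_image_of_mem _ (hs n))).trans_lt hn

theorem inf_discretized_meanfield_drift_tendsto_general
    (T : ℝ) (N : ℕ)
    (b : ℝ → (Fin N → ℝ) → ℝ)
    (hb_cont : ContinuousOn (fun p : ℝ × (Fin N → ℝ) => b p.1 p.2)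
      (Set.Icc (0 : ℝ) T ×ˢ (Set.univ : Set (Fin N → ℝ))))
    (hb_mono : ∀ u ∈ Set.Icc (0 : ℝ) T, Monotone (b u))
    (f : ℕ → ℝ → (Fin N → ℝ)) (g : ℝ → (Fin N → ℝ))
    (hf_mono : ∀ n : ℕ, ∀ u ∈ Set.Icc (0 : ℝ) T, f n u ≤ f (n + 1) u)
    (hf_lim : ∀ u ∈ Set.Icc (0 : ℝ) T,
      Filter.Tendsto (fun n => f n u) Filter.atTop (nhds (g u)))
    (s : ℝ) (hs : s ∈ Set.Icc (0 : ℝ) T)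
    (hf_cont : ∀ n : ℕ, ContinuousWithinAt (f n) (Set.Icc (0 : ℝ) T) s)
    (α β : ℕ → ℝ)
    (hmem : ∀ n : ℕ, s ∈ Set.Icc (α n) (β n))
    (hsub : ∀ n : ℕ, Set.Icc (α n) (β n) ⊆ Set.Icc (0 : ℝ) T)
    (hlen : Filter.Tendsto (fun n => β n - α n) Filter.atTop (nhds 0)) :
    Filter.Tendsto (fun n => sInf ((fun u => b u (f n u)) '' Set.Icc (α n) (β n)))
      Filter.atTop (nhds (b s (g s))) := by
  have hb_at : ∀ x, ContinuousWithinAt (fun p : ℝ × (Fin N → ℝ) => b p.1 p.2)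
      (Icc 0 T ×ˢ univ) (s, x) := fun x => hb_cont _ ⟨hs, trivial⟩
  refine tendsto_sInf_image_of_monotone (S := Icc 0 T) (h := fun n u => b u (f n u))
    (fun u hu => (hb_mono u hu).comp (monotone_nat_of_le_succ fun n => hf_mono n u hu))
    (fun n => (hb_at (f n s)).comp (f := fun u => (u, f n u))
      (continuousWithinAt_id.prodMk (hf_cont n)) fun u hu => ⟨hu, trivial⟩)
    ?_ hmem (tendsto_Icc_smallSets_nhdsWithin hmem hsub hlen)
  exact (hb_at (g s)).tendsto.comp <| tendsto_nhdsWithin_iff.2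
    ⟨tendsto_const_nhds.prodMk_nhds (hf_lim s hs), .of_forall fun _ => ⟨hs, trivial⟩⟩

/-- Convergence of the infimum-discretized mean-field drifts (Step 3 of the proof of
Theorem 3.1): if `b : [0,T] × ℝᴺ → [0,∞)` is continuous and nondecreasing in its last
`N` arguments, `fₙ : [0,T] → ℝᴺ` increase pointwise (componentwise) to `g`, `s` is a
common continuity point of the `fₙ`, and `[αₙ, βₙ] ⊆ [0,T]` are intervals containing
`s` whose lengths tend to `0`, then
`inf_{u ∈ [αₙ, βₙ]} b(u, fₙ(u)) → b(s, g(s))`. -/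
theorem inf_discretized_meanfield_drift_tendsto
    (T : ℝ) (hT : 0 < T) (N : ℕ) (hN : 0 < N)
    (b : ℝ → (Fin N → ℝ) → ℝ)
    (hb_cont : ContinuousOn (fun p : ℝ × (Fin N → ℝ) => b p.1 p.2)
      (Set.Icc (0 : ℝ) T ×ˢ (Set.univ : Set (Fin N → ℝ))))
    (hb_nonneg : ∀ u ∈ Set.Icc (0 : ℝ) T, ∀ x : Fin N → ℝ, 0 ≤ b u x)
    (hb_mono : ∀ u ∈ Set.Icc (0 : ℝ) T, Monotone (b u))
    (f : ℕ → ℝ → (Fin N → ℝ)) (g : ℝ → (Fin N → ℝ))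
    (hf_mono : ∀ n : ℕ, ∀ u ∈ Set.Icc (0 : ℝ) T, f n u ≤ f (n + 1) u)
    (hf_lim : ∀ u ∈ Set.Icc (0 : ℝ) T,
      Filter.Tendsto (fun n => f n u) Filter.atTop (nhds (g u)))
    (s : ℝ) (hs : s ∈ Set.Icc (0 : ℝ) T)
    (hf_cont : ∀ n : ℕ, ContinuousWithinAt (f n) (Set.Icc (0 : ℝ) T) s)
    (α β : ℕ → ℝ)
    (hmem : ∀ n : ℕ, s ∈ Set.Icc (α n) (β n))
    (hsub : ∀ n : ℕ, Set.Icc (α n) (β n) ⊆ Set.Icc (0 : ℝ) T)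
    (hlen : Filter.Tendsto (fun n => β n - α n) Filter.atTop (nhds 0)) :
    Filter.Tendsto (fun n => sInf ((fun u => b u (f n u)) '' Set.Icc (α n) (β n)))
      Filter.atTop (nhds (b s (g s))) :=
  inf_discretized_meanfield_drift_tendsto_general T N b hb_cont hb_mono f g hf_mono hf_lim s hs
    hf_cont α β hmem hsub hlen
end

section
/- Let m be a positive integer, x_m > 0, and let ρ, ρ_m : [0,∞) → [0,∞) be nondecreasing, positive on (0,∞), with ∫₀ˣ ρ(z)⁻² dz = +∞ and ∫₀ˣ ρ_m(z)⁻² dz = +∞ for every x > 0, and ρ_m(x) ≤ ρ(x) for all x ∈ [0, x_m]. Let (U, 𝒰, μ) be a σ-finite measure space and let g : ℝ × U → ℝ be measurable such that g(·, u) is nondecreasing for every u ∈ U and ∫_U | min(g(x,u), m) − min(g(y,u), m) |² μ(du) ≤ ρ_m(|x − y|)² for all 0 ≤ x, y ≤ m. For a C² function f and w, z ∈ ℝ write D_z f(w) = f(w + z) − f(w) − z·f'(w). Then there exists a sequence (φ_k)_{k≥1} of nonnegative C² functions on ℝ with φ_k(x) increasing in k and converging to |x| for every x, 0 ≤ φ_k'(x)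 ≤ 1 for x ≥ 0, −1 ≤ φ_k'(x) ≤ 0 for x ≤ 0, φ_k'' ≥ 0, and such that sup_{0 ≤ x, y ≤ m} ∫_U D_{min(g(x,u),m) − min(g(y,u),m)} φ_k(x − y) μ(du) → 0 as k → ∞. -/
/-!
Following Yamada and Watanabe, `φ_k` is the even function with `φ_k'' = ψ_k(|·|)` and
`φ_k(0) = φ_k'(0) = 0`, where `ψ_k` is a continuous probability density supported in an interval
`(l_k, r_k) ⊂ (0, x_m)` with `ψ_k ≤ ρ⁻² / (k + 1)`. Such a density exists because `ρ⁻²` is not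
integrable at `0`: truncate `ρ⁻² / (k + 1)` to an interval `(a, r)` on which its mass is at least
`1`, and average it over windows of length `a / 2`, which makes it continuous and, `ρ⁻²` being
nonincreasing, keeps it below `ρ⁻² / (k + 1)`. Choosing `r_{k+1} ≤ l_k` and `r_k → 0`, the
slope `φ_k'` rises from `0` to `1` across the support of `ψ_k`; this gives the bounds on `φ_k'`,
the monotonicity in `k` and `|x| - r_k ≤ φ_k(x) ≤ |x|`.

For the last property, Taylor's formula bounds `D_z φ_k(w)` by `z² / 2` times the supremum of
`ψ_k` beyond `|w|` as long as `w z ≥ 0`, which the monotonicity of `g` guarantees. This is at most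
`z² / (2 (k + 1) ρ(|w|)²)`, and `0` once `|w| ≥ r_k`; integrating against
`∫ z² dμ ≤ ρ_m(|w|)² ≤ ρ(|w|)²` gives the uniform bound `1 / (2 (k + 1))`.
-/

open Filter Set MeasureTheory Topology ENNReal

theorem sub_sub_mul_le_of_hasDerivAt {f f' f'' : ℝ → ℝ} {w z c : ℝ}
    (hf : ∀ x, HasDerivAt f (f' x) x) (hf' : ∀ x, HasDerivAt f' (f'' x) x)
    (hc : ∀ t, w ≤ t → f'' t ≤ c) (hz : 0 ≤ z) :
    f (w + z) - f w - z * f' w ≤ c * z ^ 2 / 2 := by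
  have hslope : ∀ t, w ≤ t → f' t - f' w ≤ c * (t - w) := fun t ht =>
    (convex_Ici w).image_sub_le_mul_sub_of_deriv_le
      (fun x _ => (hf' x).continuousAt.continuousWithinAt)
      (fun x _ => (hf' x).differentiableAt.differentiableWithinAt)
      (fun x hx => (hf' x).deriv ▸ hc x (by rw [interior_Ici] at hx; exact hx.le))
      w self_mem_Ici t ht ht
  have hG : ∀ x, HasDerivAt (fun t => f t - t * f' w - c * (t - w) ^ 2 / 2)
      (f' x - f' w - c * (x - w)) x := fun x => by
    have hq := (((hasDerivAt_id' x).sub_const w).fun_pow 2).const_mul c |>.div_const 2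
    exact (((hf x).fun_sub ((hasDerivAt_id' x).mul_const (f' w))).fun_sub hq).congr_deriv
      (by norm_num; ring)
  have hanti := antitoneOn_of_hasDerivWithinAt_nonpos (convex_Ici w)
    (fun x _ => (hG x).continuousAt.continuousWithinAt) (fun x _ => (hG x).hasDerivWithinAt)
    (fun x hx => by rw [interior_Ici] at hx; linarith [hslope x hx.le])
  have := hanti self_mem_Ici (show w + z ∈ Ici w by simpa using hz) (by linarith)
  simp only [sub_self, add_sub_cancel_left] at this
  linarith

open intervalIntegral

theorem continuous_integral_add {f : ℝ → ℝ} (hf : ∀ a b, IntervalIntegrable f volume a b)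
    (δ : ℝ) : Continuous fun x => ∫ t in x..x + δ, f t := by
  rw [funext fun x => (integral_interval_sub_left (hf 0 (x + δ)) (hf 0 x)).symm]
  exact ((continuous_primitive hf 0).comp (continuous_add_const δ)).sub (continuous_primitive hf 0)

theorem integral_integral_add_eq_mul {f : ℝ → ℝ} (hf : ∀ a b, IntervalIntegrable f volume a b)
    {l r δ : ℝ} (hδ : 0 ≤ δ) (hl : ∀ t, t ≤ l + δ → f t = 0) (hr : ∀ t, r ≤ t → f t = 0) :
    ∫ x in l..r, (∫ t in x..x + δ, f t) = δ * ∫ t in l..r, f t := by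
  set H : ℝ → ℝ := fun x => ∫ t in l..x, f t
  have hH : Continuous H := continuous_primitive hf l
  have hHi : ∀ a b, IntervalIntegrable H volume a b := fun a b => hH.intervalIntegrable a b
  have hH0 : EqOn H 0 (uIcc l (l + δ)) := fun x hx => by
    rw [uIcc_of_le (by linarith)] at hx
    refine (integral_congr (g := 0) fun t ht => hl t ?_).trans (by simp)
    rw [uIcc_of_le hx.1] at ht
    exact ht.2.trans hx.2
  have hHr : EqOn H (fun _ => H r) (uIcc r (r + δ)) := fun x hx => by
    rw [uIcc_of_le (by linarith)] at hx
    show ∫ t in l..x, f t = ∫ t in l..r, f t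
    rw [← integral_add_adjacent_intervals (hf l r) (hf r x),
      integral_congr (a := r) (g := fun _ => 0) fun t ht => hr t ?_,
      intervalIntegral.integral_zero, add_zero]
    rw [uIcc_of_le hx.1] at ht
    exact ht.1
  have hshift : ∀ x, ∫ t in x..x + δ, f t = H (x + δ) - H x := fun x =>
    (integral_interval_sub_left (hf l _) (hf l x)).symm
  simp_rw [hshift]
  have hHδ : IntervalIntegrable (fun x => H (x + δ)) volume l r :=
    (hH.comp (continuous_add_const δ)).intervalIntegrable _ _
  rw [integral_sub hHδ (hHi _ _),
    integral_comp_add_right H δ, integral_interval_sub_interval_comm' (hHi _ _) (hHi _ _)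
    (hHi _ _), integral_congr hH0, integral_congr hHr]
  simp [H]

theorem exists_one_le_integral_of_lintegral_eq_top {h : ℝ → ℝ} (hh_anti : AntitoneOn h (Ioi 0))
    (hh0 : ∀ t, 0 < t → 0 ≤ h t) {c : ℝ}
    (htop : ∫⁻ t in Ioc 0 c, ENNReal.ofReal (h t) = ⊤) :
    ∃ a, 0 < a ∧ a < c ∧ 1 ≤ ∫ t in a..c, h t := by
  have hunion : Ioc 0 c = ⋃ n : ℕ, Ioc (1 / (n + 1 : ℝ)) c := by
    ext t
    simp only [mem_Ioc, mem_iUnion]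
    refine ⟨fun ht => ?_, fun ⟨n, ht⟩ => ⟨lt_trans (by positivity) ht.1, ht.2⟩⟩
    obtain ⟨n, hn⟩ := exists_nat_one_div_lt ht.1
    exact ⟨n, hn, ht.2⟩
  have hmono : Monotone fun n : ℕ => Ioc (1 / (n + 1 : ℝ)) c := fun m n hmn =>
    Ioc_subset_Ioc_left (one_div_le_one_div_of_le (by positivity) (by exact_mod_cast by omega))
  rw [hunion, setLIntegral_iUnion_of_directed _ hmono.directed_le] at htop
  obtain ⟨n, hn⟩ := lt_iSup_iff.1 (htop ▸ one_lt_top)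
  set a : ℝ := 1 / (n + 1)
  have ha : 0 < a := by positivity
  have hac : a < c := by
    by_contra hca
    simp [Ioc_eq_empty hca] at hn
  have hint : IntegrableOn h (Ioc a c) :=
    ((hh_anti.mono fun t ht => ha.trans_le ht.1).integrableOn_isCompact isCompact_Icc).mono_set
      Ioc_subset_Icc_self
  refine ⟨a, ha, hac, ?_⟩
  rw [← ENNReal.one_le_ofReal, integral_of_le hac.le, ofReal_integral_eq_lintegral_ofReal hint
    (ae_restrict_of_forall_mem measurableSet_Ioc fun t ht => hh0 t (ha.trans ht.1))]
  exact hn.le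

namespace YamadaWatanabe

noncomputable def phiDeriv (ψ : ℝ → ℝ) (y : ℝ) : ℝ := ∫ t in (0 : ℝ)..y, ψ |t|

/-- The paper's `φ(z) = ∫₀^{|z|} ∫₀^y ψ`, written as the primitive of the odd function
`phiDeriv ψ` so that its regularity at `0` comes for free. -/
noncomputable def phi (ψ : ℝ → ℝ) (x : ℝ) : ℝ := ∫ t in (0 : ℝ)..x, phiDeriv ψ t

variable {ψ : ℝ → ℝ}

theorem phiDeriv_neg (y : ℝ) : phiDeriv ψ (-y) = -phiDeriv ψ y := by
  simp only [phiDeriv]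
  rw [integral_symm, ← neg_zero, ← integral_comp_neg]
  simp

@[simp]
theorem phi_zero : phi ψ 0 = 0 := integral_same

theorem phi_neg (x : ℝ) : phi ψ (-x) = phi ψ x := by
  simp only [phi]
  rw [integral_symm, ← neg_zero, ← integral_comp_neg]
  simp [phiDeriv_neg]

theorem phi_abs (x : ℝ) : phi ψ |x| = phi ψ x := by
  rcases abs_choice x with h | h <;> rw [h]
  exact phi_neg x

theorem phiDeriv_nonneg (hψ : ∀ t, 0 ≤ ψ t) {y : ℝ} (hy : 0 ≤ y) : 0 ≤ phiDeriv ψ y :=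
  integral_nonneg hy fun t _ => hψ |t|

theorem phi_nonneg (hψ : ∀ t, 0 ≤ ψ t) (x : ℝ) : 0 ≤ phi ψ x := by
  rw [← phi_abs]
  exact integral_nonneg (abs_nonneg x) fun t ht => phiDeriv_nonneg hψ ht.1

theorem hasDerivAt_phiDeriv (hψ : Continuous ψ) (y : ℝ) : HasDerivAt (phiDeriv ψ) (ψ |y|) y :=
  integral_hasDerivAt_right ((hψ.comp continuous_abs).intervalIntegrable _ _)
    ((hψ.comp continuous_abs).stronglyMeasurableAtFilter _ _) (hψ.comp continuous_abs).continuousAt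

theorem continuous_phiDeriv (hψ : Continuous ψ) : Continuous (phiDeriv ψ) :=
  continuous_iff_continuousAt.2 fun y => (hasDerivAt_phiDeriv hψ y).continuousAt

theorem hasDerivAt_phi (hψ : Continuous ψ) (x : ℝ) : HasDerivAt (phi ψ) (phiDeriv ψ x) x :=
  integral_hasDerivAt_right ((continuous_phiDeriv hψ).intervalIntegrable _ _)
    ((continuous_phiDeriv hψ).stronglyMeasurableAtFilter _ _) (continuous_phiDeriv hψ).continuousAt

theorem deriv_phi (hψ : Continuous ψ) : deriv (phi ψ) = phiDeriv ψ :=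
  funext fun x => (hasDerivAt_phi hψ x).deriv

theorem deriv_deriv_phi (hψ : Continuous ψ) (x : ℝ) : deriv (deriv (phi ψ)) x = ψ |x| := by
  rw [deriv_phi hψ, (hasDerivAt_phiDeriv hψ x).deriv]

theorem contDiff_phi (hψ : Continuous ψ) : ContDiff ℝ 2 (phi ψ) := by
  rw [show (2 : WithTop ℕ∞) = 1 + 1 from rfl, contDiff_succ_iff_deriv, deriv_phi hψ,
    contDiff_one_iff_deriv]
  refine ⟨fun x => (hasDerivAt_phi hψ x).differentiableAt, by simp,
    fun y => (hasDerivAt_phiDeriv hψ y).differentiableAt, ?_⟩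
  rw [funext fun y => (hasDerivAt_phiDeriv hψ y).deriv]
  exact hψ.comp continuous_abs

theorem monotone_phiDeriv (hψ : Continuous ψ) (hψ0 : ∀ t, 0 ≤ ψ t) : Monotone (phiDeriv ψ) :=
  monotone_of_hasDerivAt_nonneg (hasDerivAt_phiDeriv hψ) fun y => hψ0 |y|

theorem phi_taylor_le (hψ : Continuous ψ) {c w z : ℝ} (hc : ∀ t, |w| ≤ t → ψ t ≤ c)
    (hwz : 0 ≤ w * z) :
    phi ψ (w + z) - phi ψ w - z * phiDeriv ψ w ≤ c * z ^ 2 / 2 := by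
  have key : ∀ w z : ℝ, 0 ≤ w → 0 ≤ z → (∀ t, w ≤ t → ψ t ≤ c) →
      phi ψ (w + z) - phi ψ w - z * phiDeriv ψ w ≤ c * z ^ 2 / 2 :=
    fun w z hw hz hc => sub_sub_mul_le_of_hasDerivAt (hasDerivAt_phi hψ)
      (hasDerivAt_phiDeriv hψ) (fun t ht => hc |t| (ht.trans (le_abs_self t))) hz
  rcases mul_nonneg_iff.1 hwz with ⟨hw, hz⟩ | ⟨hw, hz⟩
  · exact key w z hw hz (by rwa [abs_of_nonneg hw] at hc)
  · have := key (-w) (-z) (neg_nonneg.2 hw) (neg_nonneg.2 hz) (by rwa [abs_of_nonpos hw] at hc)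
    rwa [← neg_add, phi_neg, phi_neg, phiDeriv_neg, neg_sq, neg_mul_neg] at this

structure IsUnitBump (ψ : ℝ → ℝ) (l r : ℝ) : Prop where
  pos : 0 < l
  continuous : Continuous ψ
  nonneg : ∀ t, 0 ≤ ψ t
  support_subset : Function.support ψ ⊆ Ioo l r
  integral_eq_one : ∫ t in l..r, ψ t = 1

namespace IsUnitBump

variable {l r : ℝ}

theorem eq_zero_of_le (h : IsUnitBump ψ l r) {t : ℝ} (ht : t ≤ l) : ψ t = 0 :=
  Function.notMem_support.1 fun hs => (h.support_subset hs).1.not_ge ht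

theorem eq_zero_of_ge (h : IsUnitBump ψ l r) {t : ℝ} (ht : r ≤ t) : ψ t = 0 :=
  Function.notMem_support.1 fun hs => (h.support_subset hs).2.not_ge ht

theorem left_lt_right (h : IsUnitBump ψ l r) : l < r := by
  by_contra hrl
  have hψ : ψ = 0 := funext fun t => (le_or_gt t l).elim h.eq_zero_of_le
    fun hlt => h.eq_zero_of_ge ((not_lt.1 hrl).trans hlt.le)
  simpa [hψ] using h.integral_eq_one

theorem phiDeriv_eq_zero (h : IsUnitBump ψ l r) {y : ℝ} (hy0 : 0 ≤ y) (hyl : y ≤ l) :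
    phiDeriv ψ y = 0 := by
  rw [phiDeriv, integral_congr (g := fun _ => 0) fun t ht => ?_, intervalIntegral.integral_zero]
  rw [uIcc_of_le hy0] at ht
  exact h.eq_zero_of_le ((abs_of_nonneg ht.1).trans_le ht.2 |>.trans hyl)

theorem phiDeriv_eq_one (h : IsUnitBump ψ l r) {y : ℝ} (hy : r ≤ y) : phiDeriv ψ y = 1 := by
  have hint : ∀ a b : ℝ, IntervalIntegrable (fun t => ψ |t|) volume a b :=
    fun a b => (h.continuous.comp continuous_abs).intervalIntegrable a b
  have hmid : ∫ t in l..r, ψ |t| = 1 := by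
    rw [← h.integral_eq_one]
    refine integral_congr fun t ht => ?_
    rw [uIcc_of_le h.left_lt_right.le] at ht
    rw [abs_of_pos (h.pos.trans_le ht.1)]
  have hright : ∫ t in r..y, ψ |t| = 0 := by
    rw [integral_congr (g := fun _ => 0) fun t ht => ?_, intervalIntegral.integral_zero]
    rw [uIcc_of_le hy] at ht
    exact h.eq_zero_of_ge (ht.1.trans (le_abs_self t))
  rw [phiDeriv, ← integral_add_adjacent_intervals (hint 0 l) (hint l y),
    ← integral_add_adjacent_intervals (hint l r) (hint r y), hmid, hright, ← phiDeriv,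
    h.phiDeriv_eq_zero h.pos.le le_rfl]
  norm_num

theorem phiDeriv_le_one (h : IsUnitBump ψ l r) (y : ℝ) : phiDeriv ψ y ≤ 1 := by
  rcases le_total y r with hy | hy
  · exact (monotone_phiDeriv h.continuous h.nonneg hy).trans (h.phiDeriv_eq_one le_rfl).le
  · exact (h.phiDeriv_eq_one hy).le

theorem phiDeriv_mem_Icc_of_nonneg (h : IsUnitBump ψ l r) {x : ℝ} (hx : 0 ≤ x) :
    phiDeriv ψ x ∈ Icc 0 1 :=
  ⟨phiDeriv_nonneg h.nonneg hx, h.phiDeriv_le_one x⟩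

theorem phiDeriv_mem_Icc_of_nonpos (h : IsUnitBump ψ l r) {x : ℝ} (hx : x ≤ 0) :
    phiDeriv ψ x ∈ Icc (-1) 0 := by
  have := h.phiDeriv_mem_Icc_of_nonneg (neg_nonneg.2 hx)
  rw [phiDeriv_neg] at this
  constructor <;> linarith [this.1, this.2]

theorem phi_le_abs (h : IsUnitBump ψ l r) (x : ℝ) : phi ψ x ≤ |x| := by
  have := image_sub_le_mul_sub_of_deriv_le
    (fun x => (hasDerivAt_phi h.continuous x).differentiableAt)
    (fun x => (deriv_phi h.continuous ▸ h.phiDeriv_le_one x)) (abs_nonneg x)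
  simpa [phi_abs] using this

theorem abs_sub_le_phi (h : IsUnitBump ψ l r) (x : ℝ) : |x| - r ≤ phi ψ x := by
  rw [← phi_abs]
  rcases le_total |x| r with hx | hx
  · linarith [phi_nonneg h.nonneg |x|]
  · have := (convex_Ici r).mul_sub_le_image_sub_of_le_deriv (C := 1)
      (fun x _ => (hasDerivAt_phi h.continuous x).continuousAt.continuousWithinAt)
      (fun x _ => (hasDerivAt_phi h.continuous x).differentiableAt.differentiableWithinAt)
      (fun t ht => by
        rw [interior_Ici] at ht
        rw [deriv_phi h.continuous, h.phiDeriv_eq_one ht.le]) r self_mem_Ici |x| hx hx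
    linarith [phi_nonneg h.nonneg r]

theorem phi_le_phi {ψ' : ℝ → ℝ} {l' r' : ℝ} (h : IsUnitBump ψ l r) (h' : IsUnitBump ψ' l' r')
    (hr'l : r' ≤ l) (x : ℝ) : phi ψ x ≤ phi ψ' x := by
  rw [← phi_abs, ← phi_abs (ψ := ψ')]
  refine integral_mono_on (abs_nonneg x) ((continuous_phiDeriv h.continuous).intervalIntegrable _ _)
    ((continuous_phiDeriv h'.continuous).intervalIntegrable _ _) fun t ht => ?_
  rcases le_total t l with htl | hlt
  · rw [h.phiDeriv_eq_zero ht.1 htl]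
    exact phiDeriv_nonneg h'.nonneg ht.1
  · rw [h'.phiDeriv_eq_one (hr'l.trans hlt)]
    exact h.phiDeriv_le_one t

theorem lintegral_taylor_le {U : Type*} [MeasurableSpace U] {μ : Measure U}
    (h : IsUnitBump ψ l r) {ρ : ℝ → ℝ} (hρ_mono : MonotoneOn ρ (Ici 0))
    (hρ_pos : ∀ t, 0 < t → 0 < ρ t) {ε : ℝ} (hε : 0 ≤ ε) (hψρ : ∀ t, 0 < t → ψ t ≤ ε / ρ t ^ 2)
    {w σ : ℝ} (hw : w ≠ 0) (hσ : 0 ≤ σ) (hσρ : |w| < r → σ ≤ ρ |w|) {Z : U → ℝ}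
    (hwZ : ∀ u, 0 ≤ w * Z u) (hZ : ∫⁻ u, ENNReal.ofReal (Z u ^ 2) ∂μ ≤ ENNReal.ofReal (σ ^ 2)) :
    ∫⁻ u, ENNReal.ofReal (phi ψ (w + Z u) - phi ψ w - Z u * phiDeriv ψ w) ∂μ ≤
      ENNReal.ofReal (ε / 2) := by
  obtain ⟨c, hc0, hcσ, hψc⟩ : ∃ c, 0 ≤ c ∧ c * σ ^ 2 ≤ ε ∧ ∀ t, |w| ≤ t → ψ t ≤ c := by
    rcases lt_or_ge |w| r with hwr | hrw
    · have hρw := hρ_pos |w| (abs_pos.2 hw)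
      refine ⟨ε / ρ |w| ^ 2, by positivity, ?_, fun t ht => ?_⟩
      · rw [div_mul_eq_mul_div, div_le_iff₀ (by positivity)]
        exact mul_le_mul_of_nonneg_left (pow_le_pow_left₀ hσ (hσρ hwr) 2) hε
      · have ht0 := (abs_pos.2 hw).trans_le ht
        exact (hψρ t ht0).trans (div_le_div_of_nonneg_left hε (by positivity)
          (pow_le_pow_left₀ hρw.le (hρ_mono (abs_nonneg w) ht0.le ht) 2))
    · exact ⟨0, le_rfl, by simp [hε], fun t ht => (h.eq_zero_of_ge (hrw.trans ht)).le⟩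
  calc ∫⁻ u, ENNReal.ofReal (phi ψ (w + Z u) - phi ψ w - Z u * phiDeriv ψ w) ∂μ
      ≤ ∫⁻ u, ENNReal.ofReal (c / 2) * ENNReal.ofReal (Z u ^ 2) ∂μ := lintegral_mono fun u => by
        rw [← ENNReal.ofReal_mul (by positivity)]
        exact ENNReal.ofReal_le_ofReal
          ((phi_taylor_le h.continuous hψc (hwZ u)).trans_eq (by ring))
    _ = ENNReal.ofReal (c / 2) * ∫⁻ u, ENNReal.ofReal (Z u ^ 2) ∂μ :=
        lintegral_const_mul' _ _ ENNReal.ofReal_ne_top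
    _ ≤ ENNReal.ofReal (c / 2) * ENNReal.ofReal (σ ^ 2) := by gcongr
    _ = ENNReal.ofReal (c * σ ^ 2 / 2) := by
        rw [← ENNReal.ofReal_mul (by positivity)]; ring_nf
    _ ≤ ENNReal.ofReal (ε / 2) := ENNReal.ofReal_le_ofReal (by linarith)

end IsUnitBump

theorem tendsto_phi_abs {ψ : ℕ → ℝ → ℝ} {l r : ℕ → ℝ} (hψ : ∀ k, IsUnitBump (ψ k) (l k) (r k))
    (hr : Tendsto r atTop (𝓝 0)) (x : ℝ) : Tendsto (fun k => phi (ψ k) x) atTop (𝓝 |x|) :=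
  tendsto_of_tendsto_of_tendsto_of_le_of_le (by simpa using tendsto_const_nhds.sub hr)
    tendsto_const_nhds (fun k => (hψ k).abs_sub_le_phi x) (fun k => (hψ k).phi_le_abs x)

theorem exists_isUnitBump_le_of_one_le_integral {h : ℝ → ℝ} (hh_anti : AntitoneOn h (Ioi 0))
    (hh0 : ∀ t, 0 < t → 0 ≤ h t) {a c : ℝ} (ha : 0 < a) (hac : a < c)
    (hI : 1 ≤ ∫ t in a..c, h t) : ∃ ψ, IsUnitBump ψ (a / 2) c ∧ ∀ t, 0 < t → ψ t ≤ h t := by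
  set f := (Ioo a c).indicator h with hf
  set T := ∫ t in a..c, h t with hT
  have hf0 : ∀ t, 0 ≤ f t := indicator_nonneg fun t ht => hh0 t (ha.trans ht.1)
  have hfi : ∀ u v, IntervalIntegrable f volume u v := fun u v =>
    ((integrable_indicator_iff measurableSet_Ioo).2
      (((hh_anti.mono fun t ht => ha.trans_le ht.1).integrableOn_isCompact
        isCompact_Icc).mono_set Ioo_subset_Icc_self)).intervalIntegrable
  have hfl : ∀ t, t ≤ a → f t = 0 := fun t ht => indicator_of_notMem (fun hm => ht.not_gt hm.1) _
  have hfr : ∀ t, c ≤ t → f t = 0 := fun t ht => indicator_of_notMem (fun hm => ht.not_gt hm.2) _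
  have hfT : ∫ t in a / 2..c, f t = T := by
    rw [hT, ← integral_add_adjacent_intervals (hfi _ a) (hfi a c),
      integral_congr (a := a / 2) (g := fun _ => 0) fun t ht => hfl t ?_,
      intervalIntegral.integral_zero, zero_add, integral_of_le hac.le, integral_of_le hac.le,
      integral_Ioc_eq_integral_Ioo, integral_Ioc_eq_integral_Ioo,
      setIntegral_indicator measurableSet_Ioo, inter_self]
    rw [uIcc_of_le (by linarith)] at ht
    exact ht.2
  refine ⟨fun x => (∫ t in x..x + a / 2, f t) / (a / 2 * T),
    ⟨half_pos ha, ?_, fun x => ?_, ?_, ?_⟩, fun x hx => ?_⟩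
  · exact (continuous_integral_add hfi _).div_const _
  · exact div_nonneg (integral_nonneg (by linarith) fun t _ => hf0 t) (by positivity)
  · refine Function.support_subset_iff'.2 fun x hx => ?_
    rw [mem_Ioo, not_and_or, not_lt, not_lt] at hx
    rw [integral_congr (g := fun _ => 0) fun t ht => ?_, intervalIntegral.integral_zero,
      zero_div]
    rw [uIcc_of_le (by linarith)] at ht
    rcases hx with hx | hx
    exacts [hfl t (by linarith [ht.2]), hfr t (hx.trans ht.1)]
  · rw [intervalIntegral.integral_div, integral_integral_add_eq_mul hfi (by linarith)
      (fun t ht => hfl t (by linarith)) hfr, hfT]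
    field_simp
  · have hfx : ∀ t ∈ Icc x (x + a / 2), f t ≤ h x := fun t ht => by
      by_cases hm : t ∈ Ioo a c
      · rw [hf, indicator_of_mem hm]
        exact hh_anti hx (hx.trans_le ht.1) ht.1
      · rw [hf, indicator_of_notMem hm]
        exact hh0 x hx
    rw [div_le_iff₀ (by positivity)]
    calc ∫ t in x..x + a / 2, f t ≤ ∫ t in x..x + a / 2, h x :=
          integral_mono_on (by linarith) (hfi _ _) intervalIntegrable_const hfx
      _ = a / 2 * h x := by simp
      _ ≤ h x * (a / 2 * T) := by
          nlinarith [mul_nonneg (mul_nonneg (hh0 x hx) ha.le) (sub_nonneg.2 hI)]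

theorem exists_isUnitBump_le {h : ℝ → ℝ} (hh_anti : AntitoneOn h (Ioi 0))
    (hh0 : ∀ t, 0 < t → 0 ≤ h t) {c : ℝ} (htop : ∫⁻ t in Ioc 0 c, ENNReal.ofReal (h t) = ⊤) :
    ∃ ψ l, IsUnitBump ψ l c ∧ ∀ t, 0 < t → ψ t ≤ h t := by
  obtain ⟨a, ha, hac, hI⟩ := exists_one_le_integral_of_lintegral_eq_top hh_anti hh0 htop
  obtain ⟨ψ, hψ, hψh⟩ := exists_isUnitBump_le_of_one_le_integral hh_anti hh0 ha hac hI
  exact ⟨ψ, a / 2, hψ, hψh⟩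

section Modulus

variable {ρ : ℝ → ℝ} (hρ_mono : MonotoneOn ρ (Ici 0)) (hρ_pos : ∀ t, 0 < t → 0 < ρ t)
  (hρ_div : ∀ x, 0 < x → ∫⁻ z in Ioc 0 x, (ENNReal.ofReal (ρ z ^ 2))⁻¹ = ⊤)
include hρ_mono hρ_pos hρ_div

theorem exists_isUnitBump_le_div_sq {ε c : ℝ} (hε : 0 < ε) (hc : 0 < c) :
    ∃ ψ l, IsUnitBump ψ l c ∧ ∀ t, 0 < t → ψ t ≤ ε / ρ t ^ 2 := by
  refine exists_isUnitBump_le ?_ (fun t _ => div_nonneg hε.le (sq_nonneg _)) ?_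
  · intro s (hs : 0 < s) t (ht : 0 < t) hst
    exact div_le_div_of_nonneg_left hε.le (pow_pos (hρ_pos s hs) 2)
      (pow_le_pow_left₀ (hρ_pos s hs).le (hρ_mono hs.le ht.le hst) 2)
  · rw [setLIntegral_congr_fun measurableSet_Ioc fun t ht => by
      rw [ENNReal.ofReal_div_of_pos (pow_pos (hρ_pos t ht.1) 2), div_eq_mul_inv],
      lintegral_const_mul' _ _ ENNReal.ofReal_ne_top, hρ_div c hc]
    exact ENNReal.mul_top (by simpa using hε)

theorem exists_isUnitBump_seq {ε : ℕ → ℝ} (hε : ∀ k, 0 < ε k) {x₀ : ℝ} (hx₀ : 0 < x₀) :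
    ∃ (l r : ℕ → ℝ) (ψ : ℕ → ℝ → ℝ), Tendsto r atTop (𝓝 0) ∧ ∀ k, r k ≤ x₀ ∧ r (k + 1) ≤ l k ∧
      IsUnitBump (ψ k) (l k) (r k) ∧ ∀ t, 0 < t → ψ k t ≤ ε k / ρ t ^ 2 := by
  choose! Ψ L hΨ using fun k (b : ℝ) (hb : 0 < b) =>
    exists_isUnitBump_le_div_sq hρ_mono hρ_pos hρ_div (hε k) hb
  let c : ℕ → ℝ := fun k => Nat.rec x₀ (fun k ck => L k (ck / 2)) k
  have hc : ∀ k, 0 < c k := fun k => by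
    induction k with
    | zero => exact hx₀
    | succ k ih => exact (hΨ k _ (half_pos ih)).1.pos
  have hdecay : ∀ k, c k ≤ x₀ / 2 ^ k := fun k => by
    induction k with
    | zero => simp [c]
    | succ k ih =>
      rw [pow_succ, ← div_div]
      exact (hΨ k _ (half_pos (hc k))).1.left_lt_right.le.trans (by linarith)
  refine ⟨fun k => c (k + 1), fun k => c k / 2, fun k => Ψ k (c k / 2), ?_,
    fun k => ⟨?_, half_le_self (hc (k + 1)).le, hΨ k _ (half_pos (hc k))⟩⟩
  · refine squeeze_zero (fun k => (half_pos (hc k)).le)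
      (fun k => (half_le_self (hc k).le).trans (hdecay k)) ?_
    exact tendsto_const_nhds.div_atTop (tendsto_pow_atTop_atTop_of_one_lt one_lt_two)
  · exact (half_le_self (hc k).le).trans
      ((hdecay k).trans (div_le_self hx₀.le (one_le_pow₀ one_le_two)))

end Modulus

end YamadaWatanabe

open YamadaWatanabe

theorem exists_yamada_watanabe_jump_approx_general
    {U : Type*} [MeasurableSpace U] (μ : MeasureTheory.Measure U)
    (m : ℕ) (x_m : ℝ) (hx_m : 0 < x_m)
    (ρ ρm : ℝ → ℝ)
    (hρm_nonneg : ∀ x : ℝ, 0 ≤ x → 0 ≤ ρm x)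
    (hρ_mono : MonotoneOn ρ (Set.Ici (0 : ℝ)))
    (hρ_pos : ∀ x : ℝ, 0 < x → 0 < ρ x)
    (hρ_div : ∀ x : ℝ, 0 < x →
      ∫⁻ z in Set.Ioc (0 : ℝ) x, (ENNReal.ofReal ((ρ z) ^ 2))⁻¹ = ⊤)
    (hρmρ : ∀ x ∈ Set.Icc (0 : ℝ) x_m, ρm x ≤ ρ x)
    (g : ℝ → U → ℝ)
    (hg_mono : ∀ u : U, Monotone (fun x => g x u))
    (hg_bound : ∀ x y : ℝ, 0 ≤ x → x ≤ (m : ℝ) → 0 ≤ y → y ≤ (m : ℝ) →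
      ∫⁻ u, ENNReal.ofReal ((min (g x u) (m : ℝ) - min (g y u) (m : ℝ)) ^ 2) ∂μ ≤
        ENNReal.ofReal ((ρm |x - y|) ^ 2)) :
    ∃ φ : ℕ → ℝ → ℝ,
      (∀ k : ℕ, 1 ≤ k → ContDiff ℝ 2 (φ k)) ∧
      (∀ k : ℕ, 1 ≤ k → ∀ x : ℝ, 0 ≤ φ k x) ∧
      (∀ k : ℕ, 1 ≤ k → ∀ x : ℝ, φ k x ≤ φ (k + 1) x) ∧
      (∀ x : ℝ, Filter.Tendsto (fun k => φ k x) Filter.atTop (nhds |x|)) ∧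
      (∀ k : ℕ, 1 ≤ k → ∀ x : ℝ, 0 ≤ x →
        0 ≤ deriv (φ k) x ∧ deriv (φ k) x ≤ 1) ∧
      (∀ k : ℕ, 1 ≤ k → ∀ x : ℝ, x ≤ 0 →
        -1 ≤ deriv (φ k) x ∧ deriv (φ k) x ≤ 0) ∧
      (∀ k : ℕ, 1 ≤ k → ∀ x : ℝ, 0 ≤ deriv (deriv (φ k)) x) ∧
      (∀ ε : ℝ, 0 < ε → ∃ K : ℕ, ∀ k : ℕ, K ≤ k →
        ∀ x y : ℝ, 0 ≤ x → x ≤ (m : ℝ) → 0 ≤ y → y ≤ (m : ℝ) →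
        ∫⁻ u, ENNReal.ofReal
            (φ k ((x - y) + (min (g x u) (m : ℝ) - min (g y u) (m : ℝ)))
              - φ k (x - y)
              - (min (g x u) (m : ℝ) - min (g y u) (m : ℝ)) * deriv (φ k) (x - y)) ∂μ
          ≤ ENNReal.ofReal ε) := by
  obtain ⟨l, r, ψ, hr_lim, hψ⟩ := exists_isUnitBump_seq hρ_mono hρ_pos hρ_div
    (ε := fun k => 1 / (k + 1)) (fun k => by positivity) hx_m
  choose hr hrl hbump hψρ using hψ
  have hcont : ∀ k, Continuous (ψ k) := fun k => (hbump k).continuous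
  refine ⟨fun k => phi (ψ k), fun k _ => contDiff_phi (hcont k),
    fun k _ => phi_nonneg (hbump k).nonneg,
    fun k _ => (hbump k).phi_le_phi (hbump (k + 1)) (hrl k), tendsto_phi_abs hbump hr_lim,
    fun k _ x hx => deriv_phi (hcont k) ▸ (hbump k).phiDeriv_mem_Icc_of_nonneg hx,
    fun k _ x hx => deriv_phi (hcont k) ▸ (hbump k).phiDeriv_mem_Icc_of_nonpos hx,
    fun k _ x => deriv_deriv_phi (hcont k) x ▸ (hbump k).nonneg _, fun ε hε => ?_⟩
  obtain ⟨K, hK⟩ := exists_nat_one_div_lt hε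
  refine ⟨K, fun k hk x y hx hxm hy hym => ?_⟩
  rw [deriv_phi (hcont k)]
  rcases eq_or_ne x y with rfl | hxy
  · simp
  refine ((hbump k).lintegral_taylor_le hρ_mono hρ_pos (by positivity) (hψρ k)
    (sub_ne_zero.2 hxy) (hρm_nonneg _ (abs_nonneg _))
    (fun hw => hρmρ _ ⟨abs_nonneg _, hw.le.trans (hr k)⟩) (fun u => ?_)
    (hg_bound x y hx hxm hy hym)).trans (ENNReal.ofReal_le_ofReal ?_)
  · exact (monotone_id.monovary ((hg_mono u).min monotone_const)).sub_mul_sub_nonneg y x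
  · have : 1 / ((k : ℝ) + 1) ≤ 1 / ((K : ℝ) + 1) :=
      one_div_le_one_div_of_le (by positivity) (by exact_mod_cast Nat.add_le_add_right hk 1)
    linarith

/-- Property 4(b) of the Yamada–Watanabe-type approximating sequence in the pathwise
uniqueness proof, under Assumption 4.1 (`ρ_m ≤ ρ` on `[0, x_m]`): there is a sequence
`(φ_k)_{k ≥ 1}` of nonnegative `C²` functions, pointwise nondecreasing in `k` and
converging to `|·|`, with `0 ≤ φ_k' ≤ 1` on `[0,∞)`, `−1 ≤ φ_k' ≤ 0` on `(−∞,0]`,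
`φ_k'' ≥ 0`, and such that
`sup_{0 ≤ x, y ≤ m} ∫_U D_{g_m(x,u) − g_m(y,u)} φ_k (x − y) μ(du) → 0` as `k → ∞`,
where `g_m = min(g, m)` and `D_z f(w) = f(w + z) − f(w) − z f'(w)` (a nonnegative
quantity by convexity, so the integral is a Lebesgue integral in `[0,∞]`). -/
theorem exists_yamada_watanabe_jump_approx
    {U : Type*} [MeasurableSpace U] (μ : MeasureTheory.Measure U)
    [MeasureTheory.SigmaFinite μ]
    (m : ℕ) (hm : 1 ≤ m) (x_m : ℝ) (hx_m : 0 < x_m)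
    (ρ ρm : ℝ → ℝ)
    (hρ_nonneg : ∀ x : ℝ, 0 ≤ x → 0 ≤ ρ x)
    (hρm_nonneg : ∀ x : ℝ, 0 ≤ x → 0 ≤ ρm x)
    (hρ_mono : MonotoneOn ρ (Set.Ici (0 : ℝ)))
    (hρm_mono : MonotoneOn ρm (Set.Ici (0 : ℝ)))
    (hρ_pos : ∀ x : ℝ, 0 < x → 0 < ρ x)
    (hρm_pos : ∀ x : ℝ, 0 < x → 0 < ρm x)
    (hρ_div : ∀ x : ℝ, 0 < x →
      ∫⁻ z in Set.Ioc (0 : ℝ) x, (ENNReal.ofReal ((ρ z) ^ 2))⁻¹ = ⊤)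
    (hρm_div : ∀ x : ℝ, 0 < x →
      ∫⁻ z in Set.Ioc (0 : ℝ) x, (ENNReal.ofReal ((ρm z) ^ 2))⁻¹ = ⊤)
    (hρmρ : ∀ x ∈ Set.Icc (0 : ℝ) x_m, ρm x ≤ ρ x)
    (g : ℝ → U → ℝ)
    (hg_meas : Measurable (Function.uncurry g))
    (hg_mono : ∀ u : U, Monotone (fun x => g x u))
    (hg_bound : ∀ x y : ℝ, 0 ≤ x → x ≤ (m : ℝ) → 0 ≤ y → y ≤ (m : ℝ) →
      ∫⁻ u, ENNReal.ofReal ((min (g x u) (m : ℝ) - min (g y u) (m : ℝ)) ^ 2) ∂μ ≤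
        ENNReal.ofReal ((ρm |x - y|) ^ 2)) :
    ∃ φ : ℕ → ℝ → ℝ,
      (∀ k : ℕ, 1 ≤ k → ContDiff ℝ 2 (φ k)) ∧
      (∀ k : ℕ, 1 ≤ k → ∀ x : ℝ, 0 ≤ φ k x) ∧
      (∀ k : ℕ, 1 ≤ k → ∀ x : ℝ, φ k x ≤ φ (k + 1) x) ∧
      (∀ x : ℝ, Filter.Tendsto (fun k => φ k x) Filter.atTop (nhds |x|)) ∧
      (∀ k : ℕ, 1 ≤ k → ∀ x : ℝ, 0 ≤ x →
        0 ≤ deriv (φ k) x ∧ deriv (φ k) x ≤ 1) ∧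
      (∀ k : ℕ, 1 ≤ k → ∀ x : ℝ, x ≤ 0 →
        -1 ≤ deriv (φ k) x ∧ deriv (φ k) x ≤ 0) ∧
      (∀ k : ℕ, 1 ≤ k → ∀ x : ℝ, 0 ≤ deriv (deriv (φ k)) x) ∧
      (∀ ε : ℝ, 0 < ε → ∃ K : ℕ, ∀ k : ℕ, K ≤ k →
        ∀ x y : ℝ, 0 ≤ x → x ≤ (m : ℝ) → 0 ≤ y → y ≤ (m : ℝ) →
        ∫⁻ u, ENNReal.ofReal
            (φ k ((x - y) + (min (g x u) (m : ℝ) - min (g y u) (m : ℝ)))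
              - φ k (x - y)
              - (min (g x u) (m : ℝ) - min (g y u) (m : ℝ)) * deriv (φ k) (x - y)) ∂μ
          ≤ ENNReal.ofReal ε) :=
  exists_yamada_watanabe_jump_approx_general μ m x_m hx_m ρ ρm hρm_nonneg hρ_mono hρ_pos hρ_div hρmρ
    g hg_mono hg_bound
end

section
/- Let μ be a measure on (0,∞) with ∫₀^∞ min(ζ, ζ²) μ(dζ) < +∞. Define g : ℝ × ((0,∞) × (0,∞)) → ℝ by g(x, (v, ζ)) = ζ·1_{v < x}. Then for every real m ≥ 1 the constant C_m := ∫₀^∞ (min(ζ, m))² μ(dζ) satisfies C_m ≤ m·∫₀^∞ min(ζ, ζ²) μ(dζ) < +∞, and for all 0 ≤ y ≤ x one has ∫₀^∞ ∫₀^∞ ( min(g(x,(v,ζ)), m) − min(g(y,(v,ζ)), m) )² dv μ(dζ) = (x − y)·C_m. In particular, the squared-difference bound ∫∫ (min(g(x,·),m) − min(g(y,·),m))² ≤ ρ_m(|x−y|)² holds with ρ_m(z) = √(C_m·z), a nondecreasing function with ∫₀ˣ ρ_m(z)⁻² dz = +∞ for every x > 0. -/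
open Filter Set MeasureTheory Topology ENNReal

/-!
For `y ≤ x` the truncated difference `min (g x (v, ζ)) m - min (g y (v, ζ)) m` vanishes unless
`v ∈ [y, x)`, where it equals `min ζ m` (truncation at `m ≥ 0` fixes `0`), so the inner `dv`
integral is `(x - y) · min(ζ, m)²`. The bound on `C_m` is the pointwise inequality
`min(ζ, m)² ≤ m · min(ζ, ζ²)`, and the divergence is that of `∫₀ˣ dz / z`.
-/

lemma sq_min_le_mul_min_sq {ζ m : ℝ} (hζ : 0 ≤ ζ) (hm : 1 ≤ m) :
    (min ζ m) ^ 2 ≤ m * min ζ (ζ ^ 2) := by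
  rcases le_total ζ 1 with hζ1 | hζ1
  · rw [min_eq_left (hζ1.trans hm), min_eq_right (by nlinarith)]
    nlinarith
  · rw [min_eq_left (show ζ ≤ ζ ^ 2 by nlinarith)]
    have h₁ : min ζ m ≤ m := min_le_right _ _
    have h₂ : min ζ m ≤ ζ := min_le_left _ _
    have h₀ : 0 ≤ min ζ m := le_min hζ (zero_le_one.trans hm)
    nlinarith

lemma setLIntegral_sq_min_le (μ : Measure ℝ) {m : ℝ} (hm : 1 ≤ m) :
    ∫⁻ ζ in Ioi 0, ENNReal.ofReal ((min ζ m) ^ 2) ∂μ ≤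
      ENNReal.ofReal m * ∫⁻ ζ in Ioi 0, ENNReal.ofReal (min ζ (ζ ^ 2)) ∂μ := by
  rw [← lintegral_const_mul' _ _ ofReal_ne_top]
  refine setLIntegral_mono' measurableSet_Ioi fun ζ hζ => ?_
  rw [← ENNReal.ofReal_mul (zero_le_one.trans hm)]
  exact ENNReal.ofReal_le_ofReal (sq_min_le_mul_min_sq (le_of_lt hζ) hm)

noncomputable def cbiJump (x : ℝ) (p : ℝ × ℝ) : ℝ := if p.1 < x then p.2 else 0

lemma ofReal_sq_min_cbiJump_sub {x y m : ℝ} (hm : 0 ≤ m) (hyx : y ≤ x) (v ζ : ℝ) :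
    ENNReal.ofReal ((min (cbiJump x (v, ζ)) m - min (cbiJump y (v, ζ)) m) ^ 2) =
      (Ico y x).indicator (fun _ => ENNReal.ofReal ((min ζ m) ^ 2)) v := by
  by_cases hvy : v < y
  · simp [cbiJump, hvy, hvy.trans_le hyx]
  by_cases hvx : v < x
  · simp [cbiJump, hvy, hvx, min_eq_left hm, le_of_not_gt hvy]
  · simp [cbiJump, hvy, hvx]

lemma setLIntegral_Ioi_indicator_Ico {x y : ℝ} (hy : 0 ≤ y) (c : ℝ≥0∞) :
    ∫⁻ v in Ioi 0, (Ico y x).indicator (fun _ => c) v = c * ENNReal.ofReal (x - y) := by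
  rw [restrict_Ioi_eq_restrict_Ici, lintegral_indicator measurableSet_Ico,
    Measure.restrict_restrict measurableSet_Ico,
    inter_eq_left.2 (Ico_subset_Ici_self.trans (Ici_subset_Ici.2 hy)), setLIntegral_const,
    Real.volume_Ico]

lemma lintegral_sq_min_cbiJump_sub (μ : Measure ℝ) {x y m : ℝ} (hm : 0 ≤ m) (hy : 0 ≤ y)
    (hyx : y ≤ x) :
    ∫⁻ ζ in Ioi 0, (∫⁻ v in Ioi 0,
        ENNReal.ofReal ((min (cbiJump x (v, ζ)) m - min (cbiJump y (v, ζ)) m) ^ 2)) ∂μ =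
      ENNReal.ofReal (x - y) * ∫⁻ ζ in Ioi 0, ENNReal.ofReal ((min ζ m) ^ 2) ∂μ := by
  simp_rw [ofReal_sq_min_cbiJump_sub hm hyx, setLIntegral_Ioi_indicator_Ico hy]
  rw [lintegral_mul_const' _ _ ofReal_ne_top, mul_comm]

lemma lintegral_sq_min_cbiJump_sub_abs (μ : Measure ℝ) {x y m : ℝ} (hm : 0 ≤ m) (hx : 0 ≤ x)
    (hy : 0 ≤ y) :
    ∫⁻ ζ in Ioi 0, (∫⁻ v in Ioi 0,
        ENNReal.ofReal ((min (cbiJump x (v, ζ)) m - min (cbiJump y (v, ζ)) m) ^ 2)) ∂μ =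
      ENNReal.ofReal |x - y| * ∫⁻ ζ in Ioi 0, ENNReal.ofReal ((min ζ m) ^ 2) ∂μ := by
  rcases le_total y x with hyx | hxy
  · rw [abs_of_nonneg (sub_nonneg.2 hyx), lintegral_sq_min_cbiJump_sub μ hm hy hyx]
  · simp_rw [← neg_sub (min (cbiJump y _) m), neg_sq]
    rw [abs_sub_comm, abs_of_nonneg (sub_nonneg.2 hxy), lintegral_sq_min_cbiJump_sub μ hm hx hxy]

lemma setLIntegral_inv_ofReal_Ioc_eq_top {x : ℝ} (hx : 0 < x) :
    ∫⁻ z in Ioc 0 x, (ENNReal.ofReal z)⁻¹ = ⊤ := by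
  by_contra hfin
  have hint : IntegrableOn (fun z : ℝ => z⁻¹) (Ioc 0 x) := by
    refine ⟨measurable_inv.aestronglyMeasurable, ?_⟩
    rw [hasFiniteIntegral_iff_ofReal ((ae_restrict_iff' measurableSet_Ioc).2
      (.of_forall fun z hz => inv_nonneg.2 hz.1.le)),
      setLIntegral_congr_fun measurableSet_Ioc fun z hz => ofReal_inv_of_pos hz.1]
    exact lt_top_iff_ne_top.2 hfin
  have := (intervalIntegrable_iff_integrableOn_Ioc_of_le hx.le).2 hint
  simp [hx.ne, hx.le] at this

lemma setLIntegral_inv_ofReal_mul_Ioc_eq_top {c x : ℝ} (hc : 0 ≤ c) (hx : 0 < x) :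
    ∫⁻ z in Ioc 0 x, (ENNReal.ofReal (c * z))⁻¹ = ⊤ := by
  simp_rw [ENNReal.ofReal_mul hc, ENNReal.mul_inv (.inr ofReal_ne_top) (.inl ofReal_ne_top)]
  rw [lintegral_const_mul _ (by fun_prop), setLIntegral_inv_ofReal_Ioc_eq_top hx,
    ENNReal.mul_top (ENNReal.inv_ne_zero.2 ofReal_ne_top)]

/-- Verification of condition (2)(iv) of Assumption 2.2 for the CBI-type jump
coefficient `g(x, (v, ζ)) = ζ · 1_{v < x}`: if `μ` is a measure on `(0,∞)` with
`∫ min(ζ, ζ²) μ(dζ) < ∞` and `m ≥ 1`, then `C_m = ∫ (min(ζ, m))² μ(dζ)` satisfies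
`C_m ≤ m ∫ min(ζ, ζ²) μ(dζ) < ∞`; for `0 ≤ y ≤ x` the double integral
`∫∫ (min(g(x,(v,ζ)), m) − min(g(y,(v,ζ)), m))² dv μ(dζ)` equals `(x − y) · C_m`;
and with `ρ_m(z) = √(C_m z)` (a nondecreasing function) one has the bound
`∫∫ (…)² ≤ ρ_m(|x − y|)²` for all `x, y ≥ 0` and the divergence
`∫₀ˣ ρ_m(z)⁻² dz = +∞` for all `x > 0` (convention `1/0 = +∞`). -/
theorem cbi_jump_coefficient_square_bound
    (μ : MeasureTheory.Measure ℝ)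
    (hμ : ∫⁻ ζ in Set.Ioi (0 : ℝ), ENNReal.ofReal (min ζ (ζ ^ 2)) ∂μ < ⊤)
    (m : ℝ) (hm : 1 ≤ m)
    (g : ℝ → ℝ × ℝ → ℝ)
    (hg : ∀ (x v ζ : ℝ), g x (v, ζ) = if v < x then ζ else 0)
    (Cm : ℝ≥0∞)
    (hCm : Cm = ∫⁻ ζ in Set.Ioi (0 : ℝ), ENNReal.ofReal ((min ζ m) ^ 2) ∂μ)
    (ρm : ℝ → ℝ)
    (hρm : ∀ z : ℝ, ρm z = Real.sqrt (Cm.toReal * z)) :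
    (Cm ≤ ENNReal.ofReal m *
        ∫⁻ ζ in Set.Ioi (0 : ℝ), ENNReal.ofReal (min ζ (ζ ^ 2)) ∂μ) ∧
    (Cm < ⊤) ∧
    (∀ x y : ℝ, 0 ≤ y → y ≤ x →
      (∫⁻ ζ in Set.Ioi (0 : ℝ), (∫⁻ v in Set.Ioi (0 : ℝ),
          ENNReal.ofReal ((min (g x (v, ζ)) m - min (g y (v, ζ)) m) ^ 2)) ∂μ)
        = ENNReal.ofReal (x - y) * Cm) ∧
    Monotone ρm ∧
    (∀ x y : ℝ, 0 ≤ x → 0 ≤ y →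
      (∫⁻ ζ in Set.Ioi (0 : ℝ), (∫⁻ v in Set.Ioi (0 : ℝ),
          ENNReal.ofReal ((min (g x (v, ζ)) m - min (g y (v, ζ)) m) ^ 2)) ∂μ)
        ≤ ENNReal.ofReal ((ρm |x - y|) ^ 2)) ∧
    (∀ x : ℝ, 0 < x →
      ∫⁻ z in Set.Ioc (0 : ℝ) x, (ENNReal.ofReal ((ρm z) ^ 2))⁻¹ = ⊤) := by
  have hm0 : 0 ≤ m := zero_le_one.trans hm
  obtain rfl : g = cbiJump := funext fun x => funext fun ⟨v, ζ⟩ => hg x v ζ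
  obtain rfl : ρm = fun z => √(Cm.toReal * z) := funext hρm
  have hCm_le : Cm ≤ ENNReal.ofReal m *
      ∫⁻ ζ in Ioi 0, ENNReal.ofReal (min ζ (ζ ^ 2)) ∂μ := hCm ▸ setLIntegral_sq_min_le μ hm
  have hCm_lt_top : Cm < ⊤ := hCm_le.trans_lt (mul_lt_top ofReal_lt_top hμ)
  have hρ_sq : ∀ z, 0 ≤ z → ENNReal.ofReal (√(Cm.toReal * z) ^ 2) = ENNReal.ofReal z * Cm :=
    fun z hz => by
      rw [Real.sq_sqrt (mul_nonneg toReal_nonneg hz), ENNReal.ofReal_mul toReal_nonneg,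
        ofReal_toReal hCm_lt_top.ne, mul_comm]
  refine ⟨hCm_le, hCm_lt_top, fun x y hy hyx => hCm ▸ lintegral_sq_min_cbiJump_sub μ hm0 hy hyx,
    Real.sqrt_monotone.comp (monotone_mul_left_of_nonneg toReal_nonneg),
    fun x y hx hy => (hCm ▸ lintegral_sq_min_cbiJump_sub_abs μ hm0 hx hy).trans_le
      (hρ_sq _ (abs_nonneg _)).ge,
    fun x hx => ?_⟩
  rw [setLIntegral_congr_fun measurableSet_Ioc fun z hz => by
    rw [Real.sq_sqrt (mul_nonneg toReal_nonneg hz.1.le)]]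
  exact setLIntegral_inv_ofReal_mul_Ioc_eq_top toReal_nonneg hx
end
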